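/- arXiv:2205.05318 — 11 statements merged into one kernel-verified Lean document; each statement's English description precedes it below -/
import Mathlib

section
/- The sequence (s̄_ℓ)_{ℓ≥1} is strictly decreasing in ℓ, and s̄_ℓ → 0 as ℓ → ∞. -/
/-- The sequence (s̄_ℓ)_{ℓ≥1} of equilibrium substrate concentrations is strictly
decreasing in ℓ and tends to 0 as ℓ → ∞. -/
theorem stmt_1
    (D sIn k : ℝ) (μ : ℝ → ℝ)
    (hD : 0 < D) (hsIn : 0 < sIn) (hk : 0 < k)
    (hμC1 : ContDiffOn ℝ 1 μ (Set.Ici 0))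
    (hμmono : StrictMonoOn μ (Set.Ici 0))
    (hμ0 : μ 0 = 0)
    (hμpos : ∀ s : ℝ, 0 < s → 0 < μ s)
    (sbar : ℕ → ℝ)
    (hsbar_mem : ∀ ℓ : ℕ, 1 ≤ ℓ → sbar ℓ ∈ Set.Ioo 0 sIn)
    (hsbar_eq : ∀ ℓ : ℕ, 1 ≤ ℓ → D * (sIn - sbar ℓ) - k * μ (sbar ℓ) * (ℓ : ℝ) = 0) :
    (∀ ℓ m : ℕ, 1 ≤ ℓ → ℓ < m → sbar m < sbar ℓ) ∧
      Filter.Tendsto sbar Filter.atTop (nhds 0) := by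
  constructor
  · intro ℓ m hℓ hlm
    by_contra h
    push_neg at h
    have hm : 1 ≤ m := le_trans hℓ hlm.le
    have h1 := hsbar_eq ℓ hℓ
    have h2 := hsbar_eq m hm
    have hℓmem := hsbar_mem ℓ hℓ
    have hmmem := hsbar_mem m hm
    have hμm : 0 < μ (sbar m) := hμpos _ hmmem.1
    have hμle : μ (sbar ℓ) ≤ μ (sbar m) :=
      hμmono.monotoneOn hℓmem.1.le hmmem.1.le h
    have hcast : (ℓ : ℝ) < m := by exact_mod_cast hlm
    nlinarith [mul_le_mul_of_nonneg_right
        (mul_le_mul_of_nonneg_left hμle hk.le) (Nat.cast_nonneg ℓ : (0:ℝ) ≤ ℓ),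
      mul_lt_mul_of_pos_left hcast (mul_pos hk hμm),
      mul_le_mul_of_nonneg_left h hD.le]
  · rw [tendsto_order]
    constructor
    · intro a ha
      filter_upwards [Filter.eventually_ge_atTop 1] with ℓ hℓ
      exact lt_trans ha (hsbar_mem ℓ hℓ).1
    · intro a ha
      set b := min a sIn with hb
      have hb0 : 0 < b := lt_min ha hsIn
      have hbhalf : b / 2 ∈ Set.Ioo (0:ℝ) sIn :=
        ⟨by linarith, lt_of_lt_of_le (by linarith) (min_le_right a sIn)⟩
      have hμb : 0 < μ (b / 2) := hμpos _ hbhalf.1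
      obtain ⟨N, hN⟩ := exists_nat_gt (D * sIn / (k * μ (b / 2)))
      filter_upwards [Filter.eventually_ge_atTop (max N 1)] with ℓ hℓ
      have hℓ1 : 1 ≤ ℓ := le_trans (le_max_right N 1) hℓ
      have hℓN : (N : ℝ) ≤ ℓ := by exact_mod_cast le_trans (le_max_left N 1) hℓ
      have heq := hsbar_eq ℓ hℓ1
      have hmem := hsbar_mem ℓ hℓ1
      by_contra hcon
      push_neg at hcon
      have hble : b / 2 ≤ sbar ℓ :=
        le_trans (le_trans (by linarith) (min_le_left a sIn)) hcon
      have hμle : μ (b / 2) ≤ μ (sbar ℓ) :=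
        hμmono.monotoneOn hbhalf.1.le hmem.1.le hble
      have hgt : D * sIn / (k * μ (b / 2)) < (ℓ : ℝ) := lt_of_lt_of_le hN hℓN
      have hDs : D * sIn < k * μ (b / 2) * ℓ := by
        rw [div_lt_iff₀ (mul_pos hk hμb)] at hgt
        nlinarith
      have hℓ0 : (0:ℝ) ≤ ℓ := Nat.cast_nonneg ℓ
      nlinarith [mul_le_mul_of_nonneg_right
          (mul_le_mul_of_nonneg_left hμle hk.le) hℓ0,
        mul_pos hD hmem.1]
end

section
/- For every positive integer ℓ and every s₀ ≥ 0 there exists a unique function f : [0,∞) → ℝ with f(0) = s₀ and f'(t) = D(s_in − f(t)) − k μ(f(t)) ℓ for all t ≥ 0; moreover this solution satisfies 0 ≤ f(t) ≤ max(s₀, s_in) for all t ≥ 0. -/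
/-!
The field `F s = D (s_in - s) - k ℓ μ s` is `≥ 0` for `s ≤ 0` and `≤ 0` for `s ≥ max s₀ s_in`,
so a barrier argument shows that `[0, max s₀ s_in]` is forward invariant. On that interval `F` is
Lipschitz (`μ` is `C¹`), which gives uniqueness. For existence, clamp `F` to the interval: the
clamped field is globally Lipschitz and bounded, so Picard–Lindelöf solves it on every `[0, T]`;
by invariance these solutions never leave the interval, hence solve the original equation, and by
uniqueness they glue to a solution on `[0, ∞)`.
-/

open Set Filter Topology
open scoped NNReal

theorem exists_forall_mem_Icc_hasDerivWithinAt_of_lipschitzWith {E : Type*}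
    [NormedAddCommGroup E] [NormedSpace ℝ E] [CompleteSpace E] {G : E → E} {K L : ℝ≥0}
    (hG : LipschitzWith K G) (hGL : ∀ x, ‖G x‖ ≤ L) (x₀ : E) {a b : ℝ} (hab : a ≤ b) :
    ∃ α : ℝ → E, α a = x₀ ∧ ∀ t ∈ Icc a b, HasDerivWithinAt α (G (α t)) (Icc a b) t :=
  -- `G` is globally Lipschitz and bounded, so the Picard–Lindelöf ball can have radius `L (b - a)`
  (IsPicardLindelof.of_time_independent (t₀ := ⟨a, le_rfl, hab⟩) (x₀ := x₀)
    (a := ⟨L * (b - a), by have := sub_nonneg.2 hab; positivity⟩) (r := 0)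
    (fun x _ ↦ hGL x) hG.lipschitzOnWith
    (by simp [hab]; rfl)).exists_eq_forall_mem_Icc_hasDerivWithinAt₀

section AutonomousScalarODE

variable {F f g : ℝ → ℝ} {a b m M x₀ : ℝ} {K : ℝ≥0}

theorem HasDerivWithinAt.Ici_of_Icc {f' t : ℝ} (h : HasDerivWithinAt f f' (Icc a b) t)
    (ht : t ∈ Ico a b) : HasDerivWithinAt f f' (Ici t) t :=
  h.mono_of_mem_nhdsWithin <| mem_of_superset (Ico_mem_nhdsGE ht.2) fun _ hu ↦
    ⟨ht.1.trans hu.1, hu.2.le⟩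

theorem image_le_of_hasDerivWithinAt_of_nonpos_ge (hup : ∀ s, M ≤ s → F s ≤ 0)
    (hf : ∀ t ∈ Icc a b, HasDerivWithinAt f (F (f t)) (Icc a b) t) (ha : f a ≤ M) :
    ∀ t ∈ Icc a b, f t ≤ M := by
  intro t ht
  -- Above `M` the field is `≤ 0`, so `f` cannot cross the barrier `M + ε (1 + (u - a))`.
  have barrier : ∀ ε > 0, f t ≤ M + ε * (1 + (t - a)) := fun ε hε ↦ by
    refine image_le_of_deriv_right_lt_deriv_boundary
      (B := fun u ↦ M + ε * (1 + (u - a))) (B' := fun _ ↦ ε)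
      (fun u hu ↦ (hf u hu).continuousWithinAt)
      (fun u hu ↦ (hf u (Ico_subset_Icc_self hu)).Ici_of_Icc hu)
      (by simp only [sub_self]; linarith)
      (fun u ↦ ?_) (fun u hu hfu ↦ ?_) ht
    · simpa using (((hasDerivAt_id u).sub_const a).const_add 1).const_mul ε |>.const_add M
    · have : M ≤ f u := by rw [hfu]; nlinarith [hu.1]
      linarith [hup _ this]
  refine le_of_forall_pos_le_add fun δ hδ ↦ ?_
  have hc : 0 < 1 + (t - a) := by linarith [ht.1]
  simpa [div_mul_cancel₀ _ hc.ne'] using barrier (δ / (1 + (t - a))) (by positivity)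

theorem mapsTo_Icc_of_hasDerivWithinAt (hlo : ∀ s ≤ m, 0 ≤ F s) (hup : ∀ s, M ≤ s → F s ≤ 0)
    (hf : ∀ t ∈ Icc a b, HasDerivWithinAt f (F (f t)) (Icc a b) t) (ha : f a ∈ Icc m M) :
    MapsTo f (Icc a b) (Icc m M) := by
  intro t ht
  refine ⟨?_, image_le_of_hasDerivWithinAt_of_nonpos_ge hup hf ha.2 t ht⟩
  -- the lower bound is the upper bound for `-f`, a solution of `x' = -F (-x)`
  have hneg := image_le_of_hasDerivWithinAt_of_nonpos_ge (F := fun s ↦ -F (-s)) (f := -f)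
    (M := -m) (fun s hs ↦ neg_nonpos.2 (hlo _ (by linarith)))
    (fun u hu ↦ by simpa using (hf u hu).neg) (neg_le_neg ha.1) t ht
  exact neg_le_neg_iff.1 hneg

theorem eqOn_Icc_of_hasDerivWithinAt (hF : LipschitzOnWith K F (Icc m M))
    (hlo : ∀ s ≤ m, 0 ≤ F s) (hup : ∀ s, M ≤ s → F s ≤ 0)
    (hf : ∀ t ∈ Icc a b, HasDerivWithinAt f (F (f t)) (Icc a b) t)
    (hg : ∀ t ∈ Icc a b, HasDerivWithinAt g (F (g t)) (Icc a b) t)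
    (ha : f a = g a) (hfa : f a ∈ Icc m M) : EqOn f g (Icc a b) :=
  ODE_solution_unique_of_mem_Icc_right (v := fun _ ↦ F) (s := fun _ ↦ Icc m M) (fun _ _ ↦ hF)
    (fun t ht ↦ (hf t ht).continuousWithinAt)
    (fun t ht ↦ (hf t (Ico_subset_Icc_self ht)).Ici_of_Icc ht)
    (fun _ ht ↦ mapsTo_Icc_of_hasDerivWithinAt hlo hup hf hfa (Ico_subset_Icc_self ht))
    (fun t ht ↦ (hg t ht).continuousWithinAt)
    (fun t ht ↦ (hg t (Ico_subset_Icc_self ht)).Ici_of_Icc ht)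
    (fun _ ht ↦ mapsTo_Icc_of_hasDerivWithinAt hlo hup hg (ha ▸ hfa) (Ico_subset_Icc_self ht))
    ha

theorem exists_forall_mem_Icc_hasDerivWithinAt_mapsTo (hF : LipschitzOnWith K F (Icc m M))
    (hlo : ∀ s ≤ m, 0 ≤ F s) (hup : ∀ s, M ≤ s → F s ≤ 0) (hx₀ : x₀ ∈ Icc m M)
    (hab : a ≤ b) :
    ∃ f : ℝ → ℝ, f a = x₀ ∧ (∀ t ∈ Icc a b, HasDerivWithinAt f (F (f t)) (Icc a b) t) ∧
      MapsTo f (Icc a b) (Icc m M) := by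
  have hmM : m ≤ M := hx₀.1.trans hx₀.2
  -- solve the ODE for the field clamped to `[m, M]`, which is globally Lipschitz and bounded
  set G : ℝ → ℝ := fun x ↦ F (projIcc m M hmM x)
  have hG : LipschitzWith K G := by
    have h := hF.to_restrict.comp (LipschitzWith.projIcc hmM)
    rwa [mul_one] at h
  obtain ⟨C, hC⟩ := isCompact_Icc.exists_bound_of_continuousOn hF.continuousOn
  have hGC : ∀ x, ‖G x‖ ≤ C.toNNReal := fun x ↦
    (hC _ (projIcc m M hmM x).2).trans (Real.le_coe_toNNReal C)
  have hGF : ∀ x ∈ Icc m M, G x = F x := fun x hx ↦ by simp only [G, projIcc_of_mem hmM hx]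
  have hGlo : ∀ s ≤ m, 0 ≤ G s := fun s hs ↦ by
    simpa only [G, projIcc_of_le_left hmM hs] using hlo m le_rfl
  have hGup : ∀ s, M ≤ s → G s ≤ 0 := fun s hs ↦ by
    simpa only [G, projIcc_of_right_le hmM hs] using hup M le_rfl
  obtain ⟨f, hf₀, hf⟩ := exists_forall_mem_Icc_hasDerivWithinAt_of_lipschitzWith hG hGC x₀ hab
  have hfM := mapsTo_Icc_of_hasDerivWithinAt hGlo hGup hf (hf₀ ▸ hx₀)
  exact ⟨f, hf₀, fun t ht ↦ hGF _ (hfM ht) ▸ hf t ht, hfM⟩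

theorem exists_forall_hasDerivWithinAt_Ici_mapsTo (hF : LipschitzOnWith K F (Icc m M))
    (hlo : ∀ s ≤ m, 0 ≤ F s) (hup : ∀ s, M ≤ s → F s ≤ 0) (hx₀ : x₀ ∈ Icc m M) :
    ∃ f : ℝ → ℝ, f a = x₀ ∧ (∀ t, a ≤ t → HasDerivWithinAt f (F (f t)) (Ici a) t) ∧
      MapsTo f (Ici a) (Icc m M) := by
  choose sol hsol₀ hsol hsolM using fun T : ℝ ↦
    exists_forall_mem_Icc_hasDerivWithinAt_mapsTo hF hlo hup hx₀ (le_max_left a T)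
  have hcoh : ∀ T T' u, u ∈ Icc a (max a T) → u ∈ Icc a (max a T') → sol T u = sol T' u := by
    intro T T' u hu hu'
    have hT : Icc a (min (max a T) (max a T')) ⊆ Icc a (max a T) :=
      Icc_subset_Icc_right (min_le_left _ _)
    have hT' : Icc a (min (max a T) (max a T')) ⊆ Icc a (max a T') :=
      Icc_subset_Icc_right (min_le_right _ _)
    refine eqOn_Icc_of_hasDerivWithinAt hF hlo hup
      (fun t ht ↦ (hsol T t (hT ht)).mono hT) (fun t ht ↦ (hsol T' t (hT' ht)).mono hT')
      ((hsol₀ T).trans (hsol₀ T').symm) ((hsol₀ T).symm ▸ hx₀) ⟨hu.1, le_min hu.2 hu'.2⟩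
  -- glue: on `[a, t + 1]` the solution is `sol (t + 1)`
  have hloc : ∀ t u, u ∈ Icc a (t + 1) → sol (u + 1) u = sol (t + 1) u := fun t u hu ↦
    hcoh _ _ u ⟨hu.1, by linarith [le_max_right a (u + 1)]⟩
      ⟨hu.1, hu.2.trans (le_max_right _ _)⟩
  refine ⟨fun t ↦ sol (t + 1) t, (hloc a a ⟨le_rfl, by linarith⟩).trans (hsol₀ _),
    fun t ht ↦ ?_, fun t ht ↦ hsolM (t + 1) ⟨ht, by linarith [le_max_right a (t + 1)]⟩⟩
  have hnhds : Icc a (t + 1) ∈ 𝓝[Ici a] t :=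
    inter_mem_nhdsWithin _ (Iic_mem_nhds (by linarith))
  have hsolt := hsol (t + 1) t ⟨ht, by linarith [le_max_right a (t + 1)]⟩
  refine (hsolt.mono_of_mem_nhdsWithin (mem_of_superset hnhds
    (Icc_subset_Icc_right (le_max_right _ _)))).congr_of_eventuallyEq ?_
    (hloc t t ⟨ht, by linarith⟩)
  filter_upwards [hnhds] with u hu using hloc t u hu

theorem eqOn_Ici_of_hasDerivWithinAt (hF : LipschitzOnWith K F (Icc m M))
    (hlo : ∀ s ≤ m, 0 ≤ F s) (hup : ∀ s, M ≤ s → F s ≤ 0)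
    (hf : ∀ t, a ≤ t → HasDerivWithinAt f (F (f t)) (Ici a) t)
    (hg : ∀ t, a ≤ t → HasDerivWithinAt g (F (g t)) (Ici a) t)
    (ha : f a = g a) (hfa : f a ∈ Icc m M) : EqOn f g (Ici a) := fun _ ht ↦
  eqOn_Icc_of_hasDerivWithinAt hF hlo hup (fun u hu ↦ (hf u hu.1).mono Icc_subset_Ici_self)
    (fun u hu ↦ (hg u hu.1).mono Icc_subset_Ici_self) ha hfa ⟨ht, le_rfl⟩

end AutonomousScalarODE

theorem stmt_2_general
    (D sIn k : ℝ) (μ : ℝ → ℝ)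
    (hD : 0 < D) (hsIn : 0 < sIn) (hk : 0 < k)
    (hμC1 : ContDiffOn ℝ 1 μ (Set.Ici 0))
    (hμpos : ∀ s : ℝ, 0 < s → 0 < μ s)
    (hμext : ∀ s : ℝ, s ≤ 0 → μ s = 0) :
    ∀ ℓ : ℕ, 1 ≤ ℓ → ∀ s₀ : ℝ, 0 ≤ s₀ →
      ∃ f : ℝ → ℝ,
        (f 0 = s₀ ∧
          (∀ t : ℝ, 0 ≤ t →
            HasDerivWithinAt f (D * (sIn - f t) - k * μ (f t) * (ℓ : ℝ)) (Set.Ici 0) t) ∧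
          (∀ t : ℝ, 0 ≤ t → 0 ≤ f t ∧ f t ≤ max s₀ sIn)) ∧
        ∀ g : ℝ → ℝ, g 0 = s₀ →
          (∀ t : ℝ, 0 ≤ t →
            HasDerivWithinAt g (D * (sIn - g t) - k * μ (g t) * (ℓ : ℝ)) (Set.Ici 0) t) →
          Set.EqOn g f (Set.Ici 0) := by
  intro ℓ _ s₀ hs₀
  set F : ℝ → ℝ := fun s ↦ D * (sIn - s) - k * μ s * ℓ
  have hs₀M : s₀ ∈ Icc 0 (max s₀ sIn) := ⟨hs₀, le_max_left _ _⟩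
  obtain ⟨K, hF⟩ : ∃ K, LipschitzOnWith K F (Icc 0 (max s₀ sIn)) := by
    refine ContDiffOn.exists_lipschitzOnWith ?_ one_ne_zero (convex_Icc _ _) isCompact_Icc
    have hμ := hμC1.mono Icc_subset_Ici_self (t := Icc 0 (max s₀ sIn))
    fun_prop
  have hlo : ∀ s ≤ 0, 0 ≤ F s := fun s hs ↦ by
    simp only [F, hμext s hs]; nlinarith
  have hup : ∀ s, max s₀ sIn ≤ s → F s ≤ 0 := fun s hs ↦ by
    have hsIns : sIn ≤ s := (le_max_right _ _).trans hs
    have hμs := (hμpos s (hsIn.trans_le hsIns)).le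
    have hkμℓ : 0 ≤ k * μ s * ℓ := by positivity
    simp only [F]; nlinarith
  obtain ⟨f, hf₀, hf, hfM⟩ := exists_forall_hasDerivWithinAt_Ici_mapsTo hF hlo hup hs₀M (a := 0)
  exact ⟨f, ⟨hf₀, hf, fun t ht ↦ hfM ht⟩, fun g hg₀ hg ↦
    eqOn_Ici_of_hasDerivWithinAt hF hlo hup hg hf (hg₀.trans hf₀.symm) (hg₀ ▸ hs₀M)⟩

/-- For every positive integer ℓ and every s₀ ≥ 0, the substrate ODE
s' = D(s_in − s) − k μ(s) ℓ with s(0) = s₀ has a unique solution on [0,∞), and this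
solution satisfies 0 ≤ f(t) ≤ max(s₀, s_in) for all t ≥ 0. -/
theorem stmt_2
    (D sIn k : ℝ) (μ : ℝ → ℝ)
    (hD : 0 < D) (hsIn : 0 < sIn) (hk : 0 < k)
    (hμC1 : ContDiffOn ℝ 1 μ (Set.Ici 0))
    (hμmono : StrictMonoOn μ (Set.Ici 0))
    (hμ0 : μ 0 = 0)
    (hμpos : ∀ s : ℝ, 0 < s → 0 < μ s)
    (hμext : ∀ s : ℝ, s ≤ 0 → μ s = 0) :
    ∀ ℓ : ℕ, 1 ≤ ℓ → ∀ s₀ : ℝ, 0 ≤ s₀ →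
      ∃ f : ℝ → ℝ,
        (f 0 = s₀ ∧
          (∀ t : ℝ, 0 ≤ t →
            HasDerivWithinAt f (D * (sIn - f t) - k * μ (f t) * (ℓ : ℝ)) (Set.Ici 0) t) ∧
          (∀ t : ℝ, 0 ≤ t → 0 ≤ f t ∧ f t ≤ max s₀ sIn)) ∧
        ∀ g : ℝ → ℝ, g 0 = s₀ →
          (∀ t : ℝ, 0 ≤ t →
            HasDerivWithinAt g (D * (sIn - g t) - k * μ (g t) * (ℓ : ℝ)) (Set.Ici 0) t) →
          Set.EqOn g f (Set.Ici 0) :=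
  stmt_2_general D sIn k μ hD hsIn hk hμC1 hμpos hμext
end

section
/- For all positive integers ℓ < ℓ̃, every s ≥ 0 and every t > 0, one has φ(ℓ, s, t) > φ(ℓ̃, s, t): the flow of the substrate equation is strictly decreasing in the number of bacteria. -/
open Set Filter

/-- Barrier lemma: if `y 0 ≥ 0` and at every zero of `y` before `t1` the right
derivative is positive, then `y t1 ≥ 0`. -/
lemma aux_barrier (y : ℝ → ℝ) (t1 : ℝ) (ht1 : 0 < t1)
    (hcont : ContinuousOn y (Set.Icc 0 t1)) (hy0 : 0 ≤ y 0)
    (hder : ∀ t, 0 ≤ t → t < t1 → y t = 0 →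
      ∃ d, 0 < d ∧ HasDerivWithinAt y d (Set.Ici t) t) :
    0 ≤ y t1 := by
  by_contra hneg
  push_neg at hneg
  set S : Set ℝ := Set.Icc 0 t1 ∩ y ⁻¹' Set.Ici 0 with hSdef
  have hSsub : S ⊆ Set.Icc 0 t1 := fun t ht => ht.1
  have hScl : IsClosed S :=
    ContinuousOn.preimage_isClosed_of_isClosed hcont isClosed_Icc isClosed_Ici
  have hScomp : IsCompact S := (isCompact_Icc).of_isClosed_subset hScl hSsub
  have hS0 : (0:ℝ) ∈ S := ⟨⟨le_refl 0, ht1.le⟩, hy0⟩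
  have hSne : S.Nonempty := ⟨0, hS0⟩
  set T := sSup S with hT
  have hTS : T ∈ S := hScomp.sSup_mem hSne
  have hTy : 0 ≤ y T := hTS.2
  have hT0 : 0 ≤ T := hTS.1.1
  have hTlt : T < t1 := lt_of_le_of_ne hTS.1.2 (fun h => by
    rw [h] at hTy; linarith)
  have hlt : ∀ u ∈ Set.Ioc T t1, y u < 0 := by
    intro u hu
    by_contra h
    push_neg at h
    have hm : u ∈ S := ⟨⟨hT0.trans hu.1.le, hu.2⟩, h⟩
    exact absurd (le_csSup hScomp.bddAbove hm) (not_le.2 hu.1)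
  -- y T = 0
  have hyT : y T = 0 := by
    refine le_antisymm ?_ hTy
    have htend : Filter.Tendsto y (nhdsWithin T (Set.Ioc T t1)) (nhds (y T)) :=
      (hcont T hTS.1).mono (Set.Ioc_subset_Icc_self.trans (Set.Icc_subset_Icc hT0 le_rfl))
    have hnb : (nhdsWithin T (Set.Ioc T t1)).NeBot := by
      rw [nhdsWithin_Ioc_eq_nhdsGT hTlt]; infer_instance
    exact le_of_tendsto htend (Filter.eventually_of_mem self_mem_nhdsWithin
      (fun u hu => (hlt u hu).le))
  obtain ⟨d, hd, hdw⟩ := hder T hT0 hTlt hyT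
  have hdw' : HasDerivWithinAt y d (Set.Ioi T) T := hdw.mono Set.Ioi_subset_Ici_self
  rw [hasDerivWithinAt_iff_tendsto_slope] at hdw'
  have hdiff : Set.Ioi T \ {T} = Set.Ioi T := by simp
  rw [hdiff] at hdw'
  have hd0 : d ≤ 0 := by
    refine le_of_tendsto hdw' (Filter.eventually_of_mem
      (Ioc_mem_nhdsGT_of_mem ⟨le_refl T, hTlt⟩) (fun u hu => ?_))
    rw [slope_def_field]
    apply div_nonpos_of_nonpos_of_nonneg
    · rw [hyT, sub_zero]; exact (hlt u hu).le
    · linarith [hu.1]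
  linarith

/-- Barrier lemma, strict-monotonicity variant: positive derivative on the
negativity set gives nonnegativity. -/
lemma aux_barrier' (y : ℝ → ℝ) (t1 : ℝ) (ht1 : 0 < t1)
    (hcont : ContinuousOn y (Set.Icc 0 t1)) (hy0 : 0 ≤ y 0)
    (hder : ∀ t, 0 < t → t < t1 → y t < 0 → ∃ d, 0 < d ∧ HasDerivAt y d t) :
    0 ≤ y t1 := by
  by_contra hneg
  push_neg at hneg
  set S : Set ℝ := Set.Icc 0 t1 ∩ y ⁻¹' Set.Ici 0 with hSdef
  have hSsub : S ⊆ Set.Icc 0 t1 := fun t ht => ht.1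
  have hScl : IsClosed S :=
    ContinuousOn.preimage_isClosed_of_isClosed hcont isClosed_Icc isClosed_Ici
  have hScomp : IsCompact S := (isCompact_Icc).of_isClosed_subset hScl hSsub
  have hS0 : (0:ℝ) ∈ S := ⟨⟨le_refl 0, ht1.le⟩, hy0⟩
  have hSne : S.Nonempty := ⟨0, hS0⟩
  set T := sSup S with hT
  have hTS : T ∈ S := hScomp.sSup_mem hSne
  have hTy : 0 ≤ y T := hTS.2
  have hT0 : 0 ≤ T := hTS.1.1
  have hTlt : T < t1 := lt_of_le_of_ne hTS.1.2 (fun h => by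
    rw [h] at hTy; linarith)
  have hlt : ∀ u ∈ Set.Ioc T t1, y u < 0 := by
    intro u hu
    by_contra h
    push_neg at h
    have hm : u ∈ S := ⟨⟨hT0.trans hu.1.le, hu.2⟩, h⟩
    exact absurd (le_csSup hScomp.bddAbove hm) (not_le.2 hu.1)
  have hmono : StrictMonoOn y (Set.Icc T t1) := by
    apply strictMonoOn_of_deriv_pos (convex_Icc T t1)
    · exact hcont.mono (Set.Icc_subset_Icc hT0 le_rfl)
    · intro x hx
      rw [interior_Icc] at hx
      have hxneg : y x < 0 := hlt x ⟨hx.1, hx.2.le⟩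
      obtain ⟨d, hd, hda⟩ := hder x (lt_of_le_of_lt hT0 hx.1) hx.2 hxneg
      rw [hda.deriv]; exact hd
  have := hmono ⟨le_rfl, hTlt.le⟩ ⟨hTlt.le, le_rfl⟩ hTlt
  linarith

/-- Left-slope lemma: `y ≥ 0` on `[0,t1)`, `y t1 = 0`, positive derivative at
`t1` is impossible. -/
lemma aux_left (y : ℝ → ℝ) (t1 d : ℝ) (ht1 : 0 < t1)
    (hnn : ∀ t, 0 ≤ t → t < t1 → 0 ≤ y t) (hy1 : y t1 = 0)
    (hder : HasDerivAt y d t1) (hd : 0 < d) : False := by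
  have h1 : HasDerivWithinAt y d (Set.Iio t1) t1 := hder.hasDerivWithinAt
  rw [hasDerivWithinAt_iff_tendsto_slope] at h1
  have hdiff : Set.Iio t1 \ {t1} = Set.Iio t1 := by simp
  rw [hdiff] at h1
  have hd0 : d ≤ 0 := by
    refine le_of_tendsto h1 (Filter.eventually_of_mem
      (Ico_mem_nhdsLT_of_mem ⟨ht1, le_refl t1⟩) (fun u hu => ?_))
    rw [slope_def_field]
    apply div_nonpos_of_nonneg_of_nonpos
    · rw [hy1, sub_zero]; exact hnn u hu.1 hu.2
    · linarith [hu.2]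
  linarith

/-- The flow of the substrate equation is strictly decreasing in the number of bacteria:
for ℓ < ℓ̃, s ≥ 0 and t > 0, φ(ℓ, s, t) > φ(ℓ̃, s, t). -/
theorem stmt_3
    (D sIn k : ℝ) (μ : ℝ → ℝ)
    (hD : 0 < D) (hsIn : 0 < sIn) (hk : 0 < k)
    (hμC1 : ContDiffOn ℝ 1 μ (Set.Ici 0))
    (hμmono : StrictMonoOn μ (Set.Ici 0))
    (hμ0 : μ 0 = 0)
    (hμpos : ∀ s : ℝ, 0 < s → 0 < μ s)
    (phi : ℕ → ℝ → ℝ → ℝ)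
    (hphi_init : ∀ ℓ : ℕ, 1 ≤ ℓ → ∀ s₀ : ℝ, 0 ≤ s₀ → phi ℓ s₀ 0 = s₀)
    (hphi_deriv : ∀ ℓ : ℕ, 1 ≤ ℓ → ∀ s₀ : ℝ, 0 ≤ s₀ → ∀ t : ℝ, 0 ≤ t →
      HasDerivWithinAt (phi ℓ s₀)
        (D * (sIn - phi ℓ s₀ t) - k * μ (phi ℓ s₀ t) * (ℓ : ℝ)) (Set.Ici 0) t) :
    ∀ ℓ ℓt : ℕ, 1 ≤ ℓ → ℓ < ℓt → ∀ s : ℝ, 0 ≤ s → ∀ t : ℝ, 0 < t →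
      phi ℓt s t < phi ℓ s t := by
  intro ℓ ℓt hℓ hlt s hs t ht
  have hℓt : 1 ≤ ℓt := hℓ.trans hlt.le
  have hcont : ∀ m : ℕ, 1 ≤ m → ContinuousOn (phi m s) (Set.Ici 0) := by
    intro m hm u hu
    exact (hphi_deriv m hm s hs u hu).continuousWithinAt
  have hderivAt : ∀ m : ℕ, 1 ≤ m → ∀ u : ℝ, 0 < u →
      HasDerivAt (phi m s) (D * (sIn - phi m s u) - k * μ (phi m s u) * (m : ℝ)) u := by
    intro m hm u hu
    exact (hphi_deriv m hm s hs u hu.le).hasDerivAt (Ici_mem_nhds hu)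
  have hμnn : ∀ a : ℝ, 0 ≤ a → 0 ≤ μ a := by
    intro a ha
    rcases ha.eq_or_lt with h | h
    · rw [← h, hμ0]
    · exact (hμpos a h).le
  -- Step 1: flows stay nonnegative
  have hnonneg : ∀ m : ℕ, 1 ≤ m → ∀ u : ℝ, 0 ≤ u → 0 ≤ phi m s u := by
    intro m hm u hu
    rcases hu.eq_or_lt with h | h
    · rw [← h, hphi_init m hm s hs]; exact hs
    · apply aux_barrier (phi m s) u h
        ((hcont m hm).mono (fun x hx => hx.1))
        (by rw [hphi_init m hm s hs]; exact hs)
      intro v hv0 hvu hzero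
      refine ⟨D * (sIn - phi m s v) - k * μ (phi m s v) * (m : ℝ), ?_, ?_⟩
      · rw [hzero, hμ0]; nlinarith [mul_pos hD hsIn]
      · exact (hphi_deriv m hm s hs v hv0).mono (Set.Ici_subset_Ici.2 hv0)
  -- Step 2: flows are positive for positive times
  have hpos : ∀ m : ℕ, 1 ≤ m → ∀ u : ℝ, 0 < u → 0 < phi m s u := by
    intro m hm u hu
    rcases (hnonneg m hm u hu.le).eq_or_lt with h | h
    · exfalso
      apply aux_left (phi m s) u (D * (sIn - phi m s u) - k * μ (phi m s u) * (m : ℝ)) hu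
        (fun v hv0 _ => hnonneg m hm v hv0) h.symm (hderivAt m hm u hu)
      rw [← h, hμ0]; nlinarith [mul_pos hD hsIn]
    · exact h
  set f := phi ℓ s with hf
  set g := phi ℓt s with hg
  set w := fun u => f u - g u with hw
  have hwderiv : ∀ u : ℝ, 0 < u → HasDerivAt w
      ((D * (sIn - f u) - k * μ (f u) * (ℓ : ℝ)) -
       (D * (sIn - g u) - k * μ (g u) * (ℓt : ℝ))) u := by
    intro u hu
    exact (hderivAt ℓ hℓ u hu).sub (hderivAt ℓt hℓt u hu)
  have hw0 : w 0 = 0 := by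
    simp only [hw, hf, hg, hphi_init ℓ hℓ s hs, hphi_init ℓt hℓt s hs, sub_self]
  have hℓℓt : (ℓ : ℝ) ≤ (ℓt : ℝ) := Nat.cast_le.2 hlt.le
  have hℓ1 : (1 : ℝ) ≤ (ℓ : ℝ) := by exact_mod_cast hℓ
  have hℓtgt : (ℓ : ℝ) < (ℓt : ℝ) := Nat.cast_lt.2 hlt
  -- Step 3: w ≥ 0 on [0, ∞)
  have hwnn : ∀ u : ℝ, 0 ≤ u → 0 ≤ w u := by
    intro u hu
    rcases hu.eq_or_lt with h | h
    · rw [← h, hw0]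
    · apply aux_barrier' w u h
        (((hcont ℓ hℓ).sub (hcont ℓt hℓt)).mono (fun x hx => hx.1))
        (by rw [hw0])
      intro v hv0 _ hwneg
      refine ⟨_, ?_, hwderiv v hv0⟩
      have hfv : 0 ≤ f v := hnonneg ℓ hℓ v hv0.le
      have hgv : 0 ≤ g v := hnonneg ℓt hℓt v hv0.le
      have hfg : f v < g v := by
        have : f v - g v < 0 := hwneg
        linarith
      have hμlt : μ (f v) < μ (g v) := hμmono hfv hgv hfg
      have hμf : 0 ≤ μ (f v) := hμnn _ hfv
      have e1 : 0 < D * (g v - f v) := mul_pos hD (by linarith)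
      have e2 : 0 < k * ((μ (g v) - μ (f v)) * (ℓ : ℝ)) :=
        mul_pos hk (mul_pos (by linarith) (by linarith))
      have e3 : 0 ≤ k * (μ (g v) * ((ℓt : ℝ) - (ℓ : ℝ))) :=
        mul_nonneg hk.le (mul_nonneg (by linarith) (by linarith))
      nlinarith [e1, e2, e3]
  -- Step 4: strict inequality at t
  rcases (hwnn t ht.le).eq_or_lt with h | h
  · exfalso
    have hfg : f t = g t := by
      have h2 : f t - g t = 0 := h.symm
      linarith
    apply aux_left w t
      ((D * (sIn - f t) - k * μ (f t) * (ℓ : ℝ)) -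
       (D * (sIn - g t) - k * μ (g t) * (ℓt : ℝ))) ht
      (fun v hv0 _ => hwnn v hv0) (show f t - g t = 0 by rw [hfg, sub_self]) (hwderiv t ht)
    have hgt : 0 < g t := hpos ℓt hℓt t ht
    have hμg : 0 < μ (g t) := hμpos _ hgt
    have e4 : 0 < k * μ (g t) * ((ℓt : ℝ) - (ℓ : ℝ)) :=
      mul_pos (mul_pos hk hμg) (by linarith)
    rw [hfg]
    nlinarith [e4]
  · have : 0 < f t - g t := h
    linarith
end

section
/- For every positive integer ℓ and every s₀ ≥ 0, φ(ℓ, s₀, t) converges to s̄_ℓ as t → ∞. -/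
/-!
The vector field `F x = D (s_in - x) - k μ(x) ℓ` is strictly decreasing on `[0, ∞)` and vanishes
at `s̄_ℓ`, so it is positive below `s̄_ℓ` and negative above. By the fencing theorem, a solution
never crosses a level `v` with `F v > 0` downwards, nor one with `F v < 0` upwards; and as long as
it stays on the far side of such a level, its speed is at least `|F v|`, so it reaches the level
in finite time. Hence every neighbourhood of `s̄_ℓ` is eventually entered and never left.
-/

open Set Filter Topology

section AutonomousScalarODE

variable {F s : ℝ → ℝ}

theorem continuousOn_Ici_of_hasDerivWithinAt
    (hs : ∀ t, 0 ≤ t → HasDerivWithinAt s (F (s t)) (Ici 0) t) : ContinuousOn s (Ici 0) :=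
  fun t ht => (hs t ht).continuousWithinAt

theorem hasDerivWithinAt_Ici_self_of_hasDerivWithinAt
    (hs : ∀ t, 0 ≤ t → HasDerivWithinAt s (F (s t)) (Ici 0) t) {t : ℝ} (ht : 0 ≤ t) :
    HasDerivWithinAt s (F (s t)) (Ici t) t :=
  (hs t ht).mono (Ici_subset_Ici.2 ht)

theorem le_of_hasDerivWithinAt_of_pos
    (hs : ∀ t, 0 ≤ t → HasDerivWithinAt s (F (s t)) (Ici 0) t)
    {v T t : ℝ} (hv : 0 < F v) (hT : 0 ≤ T) (hsT : v ≤ s T) (ht : T ≤ t) : v ≤ s t :=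
  image_le_of_deriv_right_lt_deriv_boundary' continuousOn_const
    (fun _ _ => hasDerivWithinAt_const _ _ v) hsT
    ((continuousOn_Ici_of_hasDerivWithinAt hs).mono fun _ hx => hT.trans hx.1)
    (fun _ hx => hasDerivWithinAt_Ici_self_of_hasDerivWithinAt hs (hT.trans hx.1))
    (fun _ _ hx => hx ▸ hv) ⟨ht, le_rfl⟩

theorem le_of_hasDerivWithinAt_of_neg
    (hs : ∀ t, 0 ≤ t → HasDerivWithinAt s (F (s t)) (Ici 0) t)
    {v T t : ℝ} (hv : F v < 0) (hT : 0 ≤ T) (hsT : s T ≤ v) (ht : T ≤ t) : s t ≤ v :=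
  image_le_of_deriv_right_lt_deriv_boundary'
    ((continuousOn_Ici_of_hasDerivWithinAt hs).mono fun _ hx => hT.trans hx.1)
    (fun _ hx => hasDerivWithinAt_Ici_self_of_hasDerivWithinAt hs (hT.trans hx.1)) hsT
    continuousOn_const (fun _ _ => hasDerivWithinAt_const _ _ v)
    (fun _ _ hx => hx ▸ hv) ⟨ht, le_rfl⟩

theorem add_mul_le_of_le_hasDerivWithinAt
    (hs : ∀ t, 0 ≤ t → HasDerivWithinAt s (F (s t)) (Ici 0) t)
    {c t : ℝ} (hc : ∀ t, 0 ≤ t → c ≤ F (s t)) (ht : 0 ≤ t) : s 0 + c * t ≤ s t := by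
  refine image_le_of_deriv_right_le_deriv_boundary (f := fun t => s 0 + c * t)
    (by fun_prop) (fun x _ => ((hasDerivAt_id x).const_mul c).const_add _ |>.hasDerivWithinAt)
    (by simp) ((continuousOn_Ici_of_hasDerivWithinAt hs).mono fun x hx => hx.1)
    (fun x hx => hasDerivWithinAt_Ici_self_of_hasDerivWithinAt hs hx.1)
    (fun x hx => by simpa using hc x hx.1) ⟨ht, le_rfl⟩

theorem le_add_mul_of_hasDerivWithinAt_le
    (hs : ∀ t, 0 ≤ t → HasDerivWithinAt s (F (s t)) (Ici 0) t)
    {c t : ℝ} (hc : ∀ t, 0 ≤ t → F (s t) ≤ c) (ht : 0 ≤ t) : s t ≤ s 0 + c * t := by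
  refine image_le_of_deriv_right_le_deriv_boundary
    ((continuousOn_Ici_of_hasDerivWithinAt hs).mono fun x hx => hx.1)
    (fun x hx => hasDerivWithinAt_Ici_self_of_hasDerivWithinAt hs hx.1)
    (B := fun t => s 0 + c * t) (by simp) (by fun_prop)
    (fun x _ => ((hasDerivAt_id x).const_mul c).const_add _ |>.hasDerivWithinAt)
    (fun x hx => by simpa using hc x hx.1) ⟨ht, le_rfl⟩

theorem exists_le_of_hasDerivWithinAt_of_pos
    (hs : ∀ t, 0 ≤ t → HasDerivWithinAt s (F (s t)) (Ici 0) t) (hF : AntitoneOn F (Ici 0))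
    (hs_nonneg : ∀ t, 0 ≤ t → 0 ≤ s t) {v : ℝ} (hv : 0 < F v) : ∃ T, 0 ≤ T ∧ v ≤ s T := by
  by_contra! hbelow
  have hc : ∀ t, 0 ≤ t → F v ≤ F (s t) := fun t ht =>
    hF (hs_nonneg t ht) ((hs_nonneg t ht).trans (hbelow t ht).le) (hbelow t ht).le
  have hT : 0 ≤ (v - s 0) / F v := div_nonneg (by linarith [hbelow 0 le_rfl]) hv.le
  have hgrowth := add_mul_le_of_le_hasDerivWithinAt hs hc hT
  rw [mul_div_cancel₀ _ hv.ne'] at hgrowth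
  linarith [hbelow _ hT]

theorem exists_le_of_hasDerivWithinAt_of_neg
    (hs : ∀ t, 0 ≤ t → HasDerivWithinAt s (F (s t)) (Ici 0) t) (hF : AntitoneOn F (Ici 0))
    {v : ℝ} (hv₀ : 0 ≤ v) (hv : F v < 0) : ∃ T, 0 ≤ T ∧ s T ≤ v := by
  by_contra! habove
  have hc : ∀ t, 0 ≤ t → F (s t) ≤ F v := fun t ht =>
    hF hv₀ (hv₀.trans (habove t ht).le) (habove t ht).le
  have hT : 0 ≤ (v - s 0) / F v := div_nonneg_of_nonpos (by linarith [habove 0 le_rfl]) hv.le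
  have hgrowth := le_add_mul_of_hasDerivWithinAt_le hs hc hT
  rw [mul_div_cancel₀ _ hv.ne] at hgrowth
  linarith [habove _ hT]

theorem eventually_le_of_hasDerivWithinAt_of_pos
    (hs : ∀ t, 0 ≤ t → HasDerivWithinAt s (F (s t)) (Ici 0) t) (hF : AntitoneOn F (Ici 0))
    (hs_nonneg : ∀ t, 0 ≤ t → 0 ≤ s t) {v : ℝ} (hv : 0 < F v) : ∀ᶠ t in atTop, v ≤ s t := by
  obtain ⟨T, hT, hsT⟩ := exists_le_of_hasDerivWithinAt_of_pos hs hF hs_nonneg hv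
  exact eventually_atTop.2 ⟨T, fun t ht => le_of_hasDerivWithinAt_of_pos hs hv hT hsT ht⟩

theorem eventually_le_of_hasDerivWithinAt_of_neg
    (hs : ∀ t, 0 ≤ t → HasDerivWithinAt s (F (s t)) (Ici 0) t) (hF : AntitoneOn F (Ici 0))
    {v : ℝ} (hv₀ : 0 ≤ v) (hv : F v < 0) : ∀ᶠ t in atTop, s t ≤ v := by
  obtain ⟨T, hT, hsT⟩ := exists_le_of_hasDerivWithinAt_of_neg hs hF hv₀ hv
  exact eventually_atTop.2 ⟨T, fun t ht => le_of_hasDerivWithinAt_of_neg hs hv hT hsT ht⟩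

theorem tendsto_of_hasDerivWithinAt_of_strictAntiOn
    (hs : ∀ t, 0 ≤ t → HasDerivWithinAt s (F (s t)) (Ici 0) t) (hF : StrictAntiOn F (Ici 0))
    {e : ℝ} (he : 0 < e) (hFe : F e = 0) (hs₀ : 0 ≤ s 0) : Tendsto s atTop (𝓝 e) := by
  have hs_nonneg : ∀ t, 0 ≤ t → 0 ≤ s t := fun t ht =>
    le_of_hasDerivWithinAt_of_pos hs (hFe.symm.trans_lt (hF self_mem_Ici he.le he)) le_rfl hs₀ ht
  refine tendsto_order.2 ⟨fun a ha => ?_, fun b hb => ?_⟩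
  · obtain ⟨v, hav, hve⟩ := exists_between (max_lt ha he)
    have hv₀ : 0 < v := (le_max_right a 0).trans_lt hav
    have hFv : 0 < F v := hFe.symm.trans_lt (hF hv₀.le he.le hve)
    filter_upwards [eventually_le_of_hasDerivWithinAt_of_pos hs hF.antitoneOn hs_nonneg hFv]
      with t ht using ((le_max_left a 0).trans_lt hav).trans_le ht
  · obtain ⟨v, hev, hvb⟩ := exists_between hb
    have hv₀ : 0 ≤ v := he.le.trans hev.le
    have hFv : F v < 0 := (hF he.le hv₀ hev).trans_eq hFe
    filter_upwards [eventually_le_of_hasDerivWithinAt_of_neg hs hF.antitoneOn hv₀ hFv]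
      with t ht using ht.trans_lt hvb

end AutonomousScalarODE

theorem stmt_7_general
    (D sIn k : ℝ) (μ : ℝ → ℝ)
    (hD : 0 < D) (hk : 0 < k)
    (hμmono : StrictMonoOn μ (Set.Ici 0))
    (sbar : ℕ → ℝ)
    (hsbar_mem : ∀ ℓ : ℕ, 1 ≤ ℓ → sbar ℓ ∈ Set.Ioo 0 sIn)
    (hsbar_eq : ∀ ℓ : ℕ, 1 ≤ ℓ → D * (sIn - sbar ℓ) - k * μ (sbar ℓ) * (ℓ : ℝ) = 0)
    (phi : ℕ → ℝ → ℝ → ℝ)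
    (hphi_init : ∀ ℓ : ℕ, 1 ≤ ℓ → ∀ s₀ : ℝ, 0 ≤ s₀ → phi ℓ s₀ 0 = s₀)
    (hphi_deriv : ∀ ℓ : ℕ, 1 ≤ ℓ → ∀ s₀ : ℝ, 0 ≤ s₀ → ∀ t : ℝ, 0 ≤ t →
      HasDerivWithinAt (phi ℓ s₀)
        (D * (sIn - phi ℓ s₀ t) - k * μ (phi ℓ s₀ t) * (ℓ : ℝ)) (Set.Ici 0) t) :
    ∀ ℓ : ℕ, 1 ≤ ℓ → ∀ s₀ : ℝ, 0 ≤ s₀ →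
      Filter.Tendsto (phi ℓ s₀) Filter.atTop (nhds (sbar ℓ)) := by
  intro ℓ hℓ s₀ hs₀
  have hℓ_pos : (0 : ℝ) < ℓ := by exact_mod_cast hℓ
  have hF : StrictAntiOn (fun x => D * (sIn - x) - k * μ x * (ℓ : ℝ)) (Ici 0) :=
    fun a ha b hb hab => by
      have hμ := mul_lt_mul_of_pos_right (mul_lt_mul_of_pos_left (hμmono ha hb hab) hk) hℓ_pos
      have hD' := mul_lt_mul_of_pos_left hab hD
      dsimp only
      linarith
  exact tendsto_of_hasDerivWithinAt_of_strictAntiOn (hphi_deriv ℓ hℓ s₀ hs₀) hF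
    (hsbar_mem ℓ hℓ).1 (hsbar_eq ℓ hℓ) ((hphi_init ℓ hℓ s₀ hs₀).symm ▸ hs₀)

/-- For every positive integer ℓ and every s₀ ≥ 0, the flow φ(ℓ, s₀, t) converges to the
equilibrium s̄_ℓ as t → ∞. -/
theorem stmt_7
    (D sIn k : ℝ) (μ : ℝ → ℝ)
    (hD : 0 < D) (hsIn : 0 < sIn) (hk : 0 < k)
    (hμC1 : ContDiffOn ℝ 1 μ (Set.Ici 0))
    (hμmono : StrictMonoOn μ (Set.Ici 0))
    (hμ0 : μ 0 = 0)
    (hμpos : ∀ s : ℝ, 0 < s → 0 < μ s)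
    (sbar : ℕ → ℝ)
    (hsbar_mem : ∀ ℓ : ℕ, 1 ≤ ℓ → sbar ℓ ∈ Set.Ioo 0 sIn)
    (hsbar_eq : ∀ ℓ : ℕ, 1 ≤ ℓ → D * (sIn - sbar ℓ) - k * μ (sbar ℓ) * (ℓ : ℝ) = 0)
    (phi : ℕ → ℝ → ℝ → ℝ)
    (hphi_init : ∀ ℓ : ℕ, 1 ≤ ℓ → ∀ s₀ : ℝ, 0 ≤ s₀ → phi ℓ s₀ 0 = s₀)
    (hphi_deriv : ∀ ℓ : ℕ, 1 ≤ ℓ → ∀ s₀ : ℝ, 0 ≤ s₀ → ∀ t : ℝ, 0 ≤ t →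
      HasDerivWithinAt (phi ℓ s₀)
        (D * (sIn - phi ℓ s₀ t) - k * μ (phi ℓ s₀ t) * (ℓ : ℝ)) (Set.Ici 0) t) :
    ∀ ℓ : ℕ, 1 ≤ ℓ → ∀ s₀ : ℝ, 0 ≤ s₀ →
      Filter.Tendsto (phi ℓ s₀) Filter.atTop (nhds (sbar ℓ)) :=
  stmt_7_general D sIn k μ hD hk hμmono sbar hsbar_mem hsbar_eq phi hphi_init hphi_deriv
end

section
/- For every positive integer ℓ and every s₀ ≥ 0 with s₀ ≠ s̄_ℓ, the map t ↦ φ(ℓ, s₀, t) is injective on [0,∞) and its image is exactly the half-open interval [s₀, s̄_ℓ) if s₀ < s̄_ℓ, and exactly (s̄_ℓ, s₀] if s₀ > s̄_ℓ; in particular, for every s in that interval there is a unique t ≥ 0 with φ(ℓ, s₀, t) = s. -/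
open Set

/-!
The right-hand side `F s = D (s_in - s) - k μ(s) ℓ` is strictly decreasing and vanishes at
`s̄_ℓ`, so a solution started at `s₀ < s̄_ℓ` increases for as long as it stays in `[s₀, s̄_ℓ)`.
It never leaves this interval: it cannot drop below `s₀` because `F s₀ > 0`, and it cannot reach
`s̄_ℓ` because `F`, being `C¹`, vanishes at most linearly there, `F s ≤ K (s̄_ℓ - s)`, which
fences it below `s̄_ℓ - (s̄_ℓ - s₀) e^{-(K+1)t}`. Conversely `F` is bounded below by a positive
constant on `[s₀, s]` for every `s < s̄_ℓ`, so the solution passes every such `s`.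
The case `s₀ > s̄_ℓ` is the mirror image under `s ↦ -s`.
-/

def SolvesODEOnIci (F x : ℝ → ℝ) : Prop :=
  ∀ t, 0 ≤ t → HasDerivWithinAt x (F (x t)) (Ici 0) t

namespace SolvesODEOnIci

variable {F x : ℝ → ℝ} {a b : ℝ}

lemma continuousOn (hx : SolvesODEOnIci F x) : ContinuousOn x (Ici 0) :=
  fun t ht => (hx t ht).continuousWithinAt

lemma hasDerivAt (hx : SolvesODEOnIci F x) {t : ℝ} (ht : 0 < t) : HasDerivAt x (F (x t)) t :=
  (hx t ht.le).hasDerivAt (Ici_mem_nhds ht)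

lemma hasDerivWithinAt_Ici (hx : SolvesODEOnIci F x) {t : ℝ} (ht : 0 ≤ t) :
    HasDerivWithinAt x (F (x t)) (Ici t) t :=
  (hx t ht).mono (Ici_subset_Ici.2 ht)

lemma neg (hx : SolvesODEOnIci F x) : SolvesODEOnIci (fun u => -F (-u)) (-x) :=
  fun t ht => by simpa using (hx t ht).neg

lemma initial_le (hx : SolvesODEOnIci F x) (hx0 : x 0 = a) (ha : 0 < F a) {t : ℝ}
    (ht : 0 ≤ t) : a ≤ x t := by
  have hfence := image_le_of_deriv_right_lt_deriv_boundary (f := fun u => -x u)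
    (f' := fun u => -F (x u)) (B := fun _ => -a) (B' := fun _ => 0)
    (hx.continuousOn.mono Icc_subset_Ici_self).neg
    (fun u hu => (hx.hasDerivWithinAt_Ici hu.1).neg) (by simp [hx0])
    (fun _ => hasDerivAt_const _ _)
    (fun u _ hu => by simp only [neg_inj.1 hu, Left.neg_neg_iff, ha])
    ⟨ht, le_rfl⟩
  exact neg_le_neg_iff.1 hfence

lemma lt_of_le_mul_sub (hx : SolvesODEOnIci F x) (hx0 : x 0 = a) (hab : a < b)
    (hFpos : ∀ s ∈ Ico a b, 0 < F s) {K : ℝ} (hFle : ∀ s ∈ Ico a b, F s ≤ K * (b - s))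
    {t : ℝ} (ht : 0 ≤ t) : x t < b := by
  set B : ℝ → ℝ := fun u => b - (b - a) * Real.exp (-(K + 1) * u)
  have hB_lt : ∀ u, B u < b := fun u => by
    simp only [B, sub_lt_self_iff]
    exact mul_pos (sub_pos.2 hab) (Real.exp_pos _)
  have hB : ∀ u, HasDerivAt B ((K + 1) * (b - B u)) u := fun u => by
    refine ((((hasDerivAt_id u).const_mul (-(K + 1))).exp.const_mul (b - a)).const_sub b
      |>.congr_deriv ?_)
    simp only [B, id]
    ring
  have hfence := image_le_of_deriv_right_lt_deriv_boundary
    (hx.continuousOn.mono Icc_subset_Ici_self) (fun u hu => hx.hasDerivWithinAt_Ici hu.1)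
    (by simp [B, hx0]) hB ?_ ⟨ht, le_rfl⟩
  · exact hfence.trans_lt (hB_lt t)
  intro u hu hxu
  have hmem : x u ∈ Ico a b :=
    ⟨hx.initial_le hx0 (hFpos a ⟨le_rfl, hab⟩) hu.1, hxu ▸ hB_lt u⟩
  calc F (x u) ≤ K * (b - x u) := hFle _ hmem
    _ < (K + 1) * (b - B u) := by rw [← hxu]; linarith [hmem.2]

lemma strictMonoOn (hx : SolvesODEOnIci F x) (hpos : ∀ t, 0 < t → 0 < F (x t)) :
    StrictMonoOn x (Ici 0) :=
  strictMonoOn_of_deriv_pos (convex_Ici 0) hx.continuousOn fun t ht => by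
    rw [interior_Ici] at ht
    rw [(hx.hasDerivAt ht).deriv]
    exact hpos t ht

lemma exists_eq_of_pos (hx : SolvesODEOnIci F x) (hx0 : x 0 = a) {s : ℝ} (has : a ≤ s)
    (hFc : ContinuousOn F (Icc a s)) (hFpos : ∀ u ∈ Icc a s, 0 < F u) :
    ∃ t, 0 ≤ t ∧ x t = s := by
  by_contra! hne
  have hlt : ∀ t, 0 ≤ t → x t < s := fun t ht => by
    by_contra! hst
    obtain ⟨u, hu, hus⟩ := intermediate_value_Icc ht (hx.continuousOn.mono Icc_subset_Ici_self)
      ⟨hx0 ▸ has, hst⟩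
    exact hne u hu.1 hus
  obtain ⟨c, hc, hcmin⟩ := isCompact_Icc.exists_isMinOn (nonempty_Icc.2 has) hFc
  have hε : 0 < F c := hFpos c hc
  have hgrowth := (convex_Ici (0 : ℝ)).mul_sub_le_image_sub_of_le_deriv hx.continuousOn
    (fun t ht => (hx.hasDerivAt (by simpa using ht)).differentiableAt.differentiableWithinAt)
    (C := F c) (fun t ht => by
      have ht' : 0 < t := by simpa using ht
      rw [(hx.hasDerivAt ht').deriv]
      exact hcmin ⟨hx.initial_le hx0 (hFpos a ⟨le_rfl, has⟩) ht'.le, (hlt t ht'.le).le⟩)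
    0 self_mem_Ici ((s - a) / F c) (div_nonneg (sub_nonneg.2 has) hε.le)
    (div_nonneg (sub_nonneg.2 has) hε.le)
  rw [sub_zero, mul_div_cancel₀ _ hε.ne', hx0] at hgrowth
  linarith [hlt _ (div_nonneg (sub_nonneg.2 has) hε.le)]

theorem strictMonoOn_and_image_eq_Ico (hx : SolvesODEOnIci F x) (hx0 : x 0 = a) (hab : a < b)
    (hFc : ContinuousOn F (Ico a b)) (hFpos : ∀ s ∈ Ico a b, 0 < F s) {K : ℝ}
    (hFle : ∀ s ∈ Ico a b, F s ≤ K * (b - s)) :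
    StrictMonoOn x (Ici 0) ∧ x '' Ici 0 = Ico a b := by
  have hmem : ∀ t, 0 ≤ t → x t ∈ Ico a b := fun t ht =>
    ⟨hx.initial_le hx0 (hFpos a ⟨le_rfl, hab⟩) ht, hx.lt_of_le_mul_sub hx0 hab hFpos hFle ht⟩
  refine ⟨hx.strictMonoOn fun t ht => hFpos _ (hmem t ht.le), ?_⟩
  refine Subset.antisymm (image_subset_iff.2 hmem) fun s hs => ?_
  exact hx.exists_eq_of_pos hx0 hs.1 (hFc.mono (Icc_subset_Ico_right hs.2))
    fun u hu => hFpos u ⟨hu.1, hu.2.trans_lt hs.2⟩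

theorem strictAntiOn_and_image_eq_Ioc (hx : SolvesODEOnIci F x) (hx0 : x 0 = a) (hba : b < a)
    (hFc : ContinuousOn F (Ioc b a)) (hFneg : ∀ s ∈ Ioc b a, F s < 0) {K : ℝ}
    (hFge : ∀ s ∈ Ioc b a, -(K * (s - b)) ≤ F s) :
    StrictAntiOn x (Ici 0) ∧ x '' Ici 0 = Ioc b a := by
  have hmem : ∀ u ∈ Ico (-a) (-b), -u ∈ Ioc b a := fun u hu =>
    ⟨lt_neg_of_lt_neg hu.2, neg_le.1 hu.1⟩
  obtain ⟨hmono, himage⟩ := hx.neg.strictMonoOn_and_image_eq_Ico (a := -a) (b := -b) (K := K)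
    (by simp [hx0]) (neg_lt_neg hba)
    ((hFc.comp continuousOn_neg hmem).neg)
    (fun u hu => neg_pos.2 (hFneg _ (hmem u hu)))
    (fun u hu => by simpa [sub_eq_add_neg, add_comm] using neg_le.1 (hFge _ (hmem u hu)))
  refine ⟨fun s hs t ht hst => neg_lt_neg_iff.1 (hmono hs ht hst), ?_⟩
  rw [← neg_neg x, Pi.neg_def, ← image_image, himage, image_neg_Ico, neg_neg, neg_neg]

theorem image_Ici_of_strictAntiOn (hx : SolvesODEOnIci F x) (hF : ContDiffOn ℝ 1 F (Ici 0))
    (hFanti : StrictAntiOn F (Ici 0)) (hb : 0 ≤ b) (hFb : F b = 0) (ha : 0 ≤ a)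
    (hx0 : x 0 = a) :
    (a < b → StrictMonoOn x (Ici 0) ∧ x '' Ici 0 = Ico a b) ∧
      (b < a → StrictAntiOn x (Ici 0) ∧ x '' Ici 0 = Ioc b a) := by
  constructor
  · intro hab
    have hsub : Icc a b ⊆ Ici 0 := fun u hu => ha.trans hu.1
    obtain ⟨K, hK⟩ := (hF.mono hsub).exists_lipschitzOnWith one_ne_zero (convex_Icc a b)
      isCompact_Icc
    refine hx.strictMonoOn_and_image_eq_Ico hx0 hab
      (hF.continuousOn.mono (Ico_subset_Icc_self.trans hsub))
      (fun s hs => hFb ▸ hFanti (hsub (Ico_subset_Icc_self hs)) hb hs.2) (K := K)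
      fun s hs => ?_
    have := hK.le_add_mul (Ico_subset_Icc_self hs) (right_mem_Icc.2 hab.le)
    rwa [hFb, zero_add, Real.dist_eq, abs_sub_comm, abs_of_pos (sub_pos.2 hs.2)] at this
  · intro hba
    have hsub : Icc b a ⊆ Ici 0 := fun u hu => hb.trans hu.1
    obtain ⟨K, hK⟩ := (hF.mono hsub).exists_lipschitzOnWith one_ne_zero (convex_Icc b a)
      isCompact_Icc
    refine hx.strictAntiOn_and_image_eq_Ioc hx0 hba
      (hF.continuousOn.mono (Ioc_subset_Icc_self.trans hsub))
      (fun s hs => hFb ▸ hFanti hb (hsub (Ioc_subset_Icc_self hs)) hs.1) (K := K)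
      fun s hs => ?_
    have := hK.le_add_mul (left_mem_Icc.2 hba.le) (Ioc_subset_Icc_self hs)
    rw [hFb, Real.dist_eq, abs_sub_comm, abs_of_pos (sub_pos.2 hs.1)] at this
    linarith

end SolvesODEOnIci

lemma Set.InjOn.existsUnique_of_mem_image {α β : Type*} {f : α → β} {s : Set α}
    (hf : InjOn f s) {y : β} (hy : y ∈ f '' s) : ∃! t, t ∈ s ∧ f t = y := by
  obtain ⟨t, ht, rfl⟩ := hy
  exact ⟨t, ⟨ht, rfl⟩, fun t' h => hf h.1 ht h.2⟩

theorem stmt_8_general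
    (D sIn k : ℝ) (μ : ℝ → ℝ)
    (hD : 0 < D) (hk : 0 < k)
    (hμC1 : ContDiffOn ℝ 1 μ (Set.Ici 0))
    (hμmono : StrictMonoOn μ (Set.Ici 0))
    (sbar : ℕ → ℝ)
    (hsbar_mem : ∀ ℓ : ℕ, 1 ≤ ℓ → sbar ℓ ∈ Set.Ioo 0 sIn)
    (hsbar_eq : ∀ ℓ : ℕ, 1 ≤ ℓ → D * (sIn - sbar ℓ) - k * μ (sbar ℓ) * (ℓ : ℝ) = 0)
    (phi : ℕ → ℝ → ℝ → ℝ)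
    (hphi_init : ∀ ℓ : ℕ, 1 ≤ ℓ → ∀ s₀ : ℝ, 0 ≤ s₀ → phi ℓ s₀ 0 = s₀)
    (hphi_deriv : ∀ ℓ : ℕ, 1 ≤ ℓ → ∀ s₀ : ℝ, 0 ≤ s₀ → ∀ t : ℝ, 0 ≤ t →
      HasDerivWithinAt (phi ℓ s₀)
        (D * (sIn - phi ℓ s₀ t) - k * μ (phi ℓ s₀ t) * (ℓ : ℝ)) (Set.Ici 0) t) :
    ∀ ℓ : ℕ, 1 ≤ ℓ → ∀ s₀ : ℝ, 0 ≤ s₀ → s₀ ≠ sbar ℓ →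
      Set.InjOn (phi ℓ s₀) (Set.Ici 0) ∧
      (s₀ < sbar ℓ → phi ℓ s₀ '' Set.Ici 0 = Set.Ico s₀ (sbar ℓ)) ∧
      (sbar ℓ < s₀ → phi ℓ s₀ '' Set.Ici 0 = Set.Ioc (sbar ℓ) s₀) ∧
      (∀ s : ℝ,
        ((s₀ < sbar ℓ ∧ s ∈ Set.Ico s₀ (sbar ℓ)) ∨ (sbar ℓ < s₀ ∧ s ∈ Set.Ioc (sbar ℓ) s₀)) →
        ∃! t : ℝ, 0 ≤ t ∧ phi ℓ s₀ t = s) := by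
  intro ℓ hℓ s₀ hs₀ hne
  have hℓpos : (0 : ℝ) < ℓ := by exact_mod_cast hℓ
  have hanti : StrictAntiOn (fun s => D * (sIn - s) - k * μ s * ℓ) (Ici 0) :=
    fun u hu v hv huv => by nlinarith [hμmono hu hv huv, mul_pos hk hℓpos]
  obtain ⟨hinc, hdec⟩ := SolvesODEOnIci.image_Ici_of_strictAntiOn
    (F := fun s => D * (sIn - s) - k * μ s * ℓ) (hphi_deriv ℓ hℓ s₀ hs₀) (by fun_prop) hanti (hsbar_mem ℓ hℓ).1.le (hsbar_eq ℓ hℓ) hs₀ (hphi_init ℓ hℓ s₀ hs₀)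
  have hinj : InjOn (phi ℓ s₀) (Ici 0) := by
    rcases hne.lt_or_gt with h | h
    exacts [(hinc h).1.injOn, (hdec h).1.injOn]
  refine ⟨hinj, fun h => (hinc h).2, fun h => (hdec h).2, ?_⟩
  rintro s (⟨h, hs⟩ | ⟨h, hs⟩)
  · exact hinj.existsUnique_of_mem_image ((hinc h).2 ▸ hs)
  · exact hinj.existsUnique_of_mem_image ((hdec h).2 ▸ hs)

/-- For s₀ ≥ 0 with s₀ ≠ s̄_ℓ, the map t ↦ φ(ℓ, s₀, t) is injective on [0,∞) and its
image is exactly [s₀, s̄_ℓ) if s₀ < s̄_ℓ and exactly (s̄_ℓ, s₀] if s₀ > s̄_ℓ; in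
particular every s in that interval is hit at a unique time t ≥ 0. -/
theorem stmt_8
    (D sIn k : ℝ) (μ : ℝ → ℝ)
    (hD : 0 < D) (hsIn : 0 < sIn) (hk : 0 < k)
    (hμC1 : ContDiffOn ℝ 1 μ (Set.Ici 0))
    (hμmono : StrictMonoOn μ (Set.Ici 0))
    (hμ0 : μ 0 = 0)
    (hμpos : ∀ s : ℝ, 0 < s → 0 < μ s)
    (sbar : ℕ → ℝ)
    (hsbar_mem : ∀ ℓ : ℕ, 1 ≤ ℓ → sbar ℓ ∈ Set.Ioo 0 sIn)
    (hsbar_eq : ∀ ℓ : ℕ, 1 ≤ ℓ → D * (sIn - sbar ℓ) - k * μ (sbar ℓ) * (ℓ : ℝ) = 0)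
    (phi : ℕ → ℝ → ℝ → ℝ)
    (hphi_init : ∀ ℓ : ℕ, 1 ≤ ℓ → ∀ s₀ : ℝ, 0 ≤ s₀ → phi ℓ s₀ 0 = s₀)
    (hphi_deriv : ∀ ℓ : ℕ, 1 ≤ ℓ → ∀ s₀ : ℝ, 0 ≤ s₀ → ∀ t : ℝ, 0 ≤ t →
      HasDerivWithinAt (phi ℓ s₀)
        (D * (sIn - phi ℓ s₀ t) - k * μ (phi ℓ s₀ t) * (ℓ : ℝ)) (Set.Ici 0) t) :
    ∀ ℓ : ℕ, 1 ≤ ℓ → ∀ s₀ : ℝ, 0 ≤ s₀ → s₀ ≠ sbar ℓ →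
      Set.InjOn (phi ℓ s₀) (Set.Ici 0) ∧
      (s₀ < sbar ℓ → phi ℓ s₀ '' Set.Ici 0 = Set.Ico s₀ (sbar ℓ)) ∧
      (sbar ℓ < s₀ → phi ℓ s₀ '' Set.Ici 0 = Set.Ioc (sbar ℓ) s₀) ∧
      (∀ s : ℝ,
        ((s₀ < sbar ℓ ∧ s ∈ Set.Ico s₀ (sbar ℓ)) ∨ (sbar ℓ < s₀ ∧ s ∈ Set.Ioc (sbar ℓ) s₀)) →
        ∃! t : ℝ, 0 ≤ t ∧ phi ℓ s₀ t = s) :=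
  stmt_8_general D sIn k μ hD hk hμC1 hμmono sbar hsbar_mem hsbar_eq phi hphi_init hphi_deriv
end

section
/- Let ℓ be a positive integer, let s₀, s ∈ [0, s̄₁] with s₀ ≠ s̄_ℓ, and suppose T ≥ 0 satisfies φ(ℓ, s₀, T) = s. Then |s − s₀| / max(D·s_in, k·μ(s̄₁)·ℓ) ≤ T ≤ |s − s₀| / (D·|s̄_ℓ − s|). -/
/-!
Write `f x = D (s_in - x) - k μ(x) ℓ`, so that `s̄_ℓ` is a zero of `f`. Between `s₀` and `s̄_ℓ`,
monotonicity of `μ` gives `D |s̄_ℓ - x| ≤ |f x|`, and since `μ` is `C¹`, hence Lipschitz on compacts,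
`|f x| ≤ L |s̄_ℓ - x|`; on `[0, s̄₁]` also `|f x| ≤ max (D s_in) (k μ(s̄₁) ℓ)`. The Lipschitz bound
keeps the solution below the barrier `s̄_ℓ - (s̄_ℓ - s₀) e^{-(L+1) t}`, so it never reaches `s̄_ℓ`;
hence it moves monotonically from `s₀` towards `s̄_ℓ`, and integrating the bounds on `|φ'| = |f φ|`
over `[0, T]` gives both inequalities.
-/

open Set

section ScalarODE

variable {φ φ' : ℝ → ℝ} {a b C : ℝ}

theorem sub_le_mul_of_hasDerivWithinAt_Ici_le (hab : a ≤ b) (hφ : ContinuousOn φ (Icc a b))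
    (hφ' : ∀ t ∈ Ico a b, HasDerivWithinAt φ (φ' t) (Ici t) t) (hC : ∀ t ∈ Ico a b, φ' t ≤ C) :
    φ b - φ a ≤ C * (b - a) := by
  have := image_le_of_deriv_right_le_deriv_boundary hφ hφ' (B := fun t => φ a + C * (t - a))
    (by simp) (by fun_prop)
    (fun t _ => ((hasDerivAt_id t).sub_const a |>.const_mul C |>.const_add (φ a)).hasDerivWithinAt)
    (by simpa using hC) (right_mem_Icc.2 hab)
  linarith

theorem mul_le_sub_of_hasDerivWithinAt_Ici_le (hab : a ≤ b) (hφ : ContinuousOn φ (Icc a b))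
    (hφ' : ∀ t ∈ Ico a b, HasDerivWithinAt φ (φ' t) (Ici t) t) (hC : ∀ t ∈ Ico a b, C ≤ φ' t) :
    C * (b - a) ≤ φ b - φ a := by
  have := sub_le_mul_of_hasDerivWithinAt_Ici_le hab hφ.neg (fun t ht => (hφ' t ht).neg)
    (C := -C) fun t ht => neg_le_neg (hC t ht)
  simp only [Pi.neg_apply] at this
  linarith

theorem monotoneOn_of_hasDerivWithinAt_Ici_nonneg (hφ : ContinuousOn φ (Icc a b))
    (hφ' : ∀ t ∈ Ico a b, HasDerivWithinAt φ (φ' t) (Ici t) t) (hC : ∀ t ∈ Ico a b, 0 ≤ φ' t) :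
    MonotoneOn φ (Icc a b) := by
  intro x hx y hy hxy
  have hsub : Icc x y ⊆ Icc a b := Icc_subset_Icc hx.1 hy.2
  have hsub' : Ico x y ⊆ Ico a b := Ico_subset_Ico hx.1 hy.2
  have := mul_le_sub_of_hasDerivWithinAt_Ici_le hxy (hφ.mono hsub)
    (fun t ht => hφ' t (hsub' ht)) fun t ht => hC t (hsub' ht)
  linarith

end ScalarODE

section AutonomousODE

variable {v φ : ℝ → ℝ} {c T x₀ : ℝ}

theorem mem_Ico_of_hasDerivWithinAt (hφ : ContinuousOn φ (Icc 0 T))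
    (hφ' : ∀ t ∈ Ico 0 T, HasDerivWithinAt φ (v (φ t)) (Ici t) t)
    (hc : φ 0 < c) (hv₀ : 0 < v (φ 0)) {L : ℝ} (hvL : ∀ x ∈ Ico (φ 0) c, v x ≤ L * (c - x)) :
    ∀ t ∈ Icc 0 T, φ t ∈ Ico (φ 0) c := by
  have hlower : ∀ t ∈ Icc 0 T, φ 0 ≤ φ t :=
    image_le_of_deriv_right_lt_deriv_boundary' continuousOn_const
      (fun t _ => hasDerivWithinAt_const t _ (φ 0)) le_rfl hφ hφ' fun t _ h => h ▸ hv₀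
  -- `B' = (L + 1) (c - B) > v B` wherever `φ` touches `B`, by `hvL`.
  let B : ℝ → ℝ := fun t => c - (c - φ 0) * Real.exp (-(L + 1) * t)
  have hB' : ∀ t, HasDerivAt B ((L + 1) * (c - B t)) t := fun t => by
    refine ((((hasDerivAt_id t).const_mul (-(L + 1))).exp).const_mul (c - φ 0)).const_sub c
      |>.congr_deriv ?_
    simp only [B, id]
    ring
  have hgap : ∀ t, 0 < c - B t := fun t => by
    simpa only [B, sub_sub_cancel] using mul_pos (sub_pos.2 hc) (Real.exp_pos _)
  have hupper : ∀ t ∈ Icc 0 T, φ t ≤ B t :=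
    image_le_of_deriv_right_lt_deriv_boundary' hφ hφ' (by simp [B])
      (fun t _ => (hB' t).continuousAt.continuousWithinAt) (fun t _ => (hB' t).hasDerivWithinAt)
      fun t ht h => by
        have := hvL (φ t) ⟨hlower t (Ico_subset_Icc_self ht), by linarith [hgap t]⟩
        rw [h] at this ⊢
        linarith [hgap t]
  exact fun t ht => ⟨hlower t ht, by linarith [hupper t ht, hgap t]⟩

theorem hitting_time_bounds_of_lt {m M L : ℝ} (hm : 0 < m) (hM : 0 < M) (hT : 0 ≤ T)
    (hφ : ContinuousOn φ (Icc 0 T))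
    (hφ' : ∀ t ∈ Ico 0 T, HasDerivWithinAt φ (v (φ t)) (Ici t) t) (hφ₀ : φ 0 = x₀) (hc : x₀ < c)
    (hv_ge : ∀ x ∈ Ico x₀ c, m * (c - x) ≤ v x)
    (hv_le : ∀ x ∈ Ico x₀ c, v x ≤ L * (c - x))
    (hv_M : ∀ x ∈ Ico x₀ c, v x ≤ M) :
    |φ T - x₀| / M ≤ T ∧ T ≤ |φ T - x₀| / (m * |c - φ T|) := by
  subst hφ₀
  have hmem := mem_Ico_of_hasDerivWithinAt hφ hφ' hc
    (lt_of_lt_of_le (by nlinarith) (hv_ge _ ⟨le_rfl, hc⟩)) hv_le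
  have hvφ : ∀ t ∈ Ico 0 T, m * (c - φ t) ≤ v (φ t) := fun t ht =>
    hv_ge _ (hmem t (Ico_subset_Icc_self ht))
  have hmono : MonotoneOn φ (Icc 0 T) := monotoneOn_of_hasDerivWithinAt_Ici_nonneg hφ hφ'
    fun t ht => le_trans (mul_nonneg hm.le (sub_nonneg.2 (hmem t (Ico_subset_Icc_self ht)).2.le))
      (hvφ t ht)
  have hT_mem : T ∈ Icc 0 T := right_mem_Icc.2 hT
  obtain ⟨h0T, hTc⟩ := hmem T hT_mem
  have hup := sub_le_mul_of_hasDerivWithinAt_Ici_le hT hφ hφ'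
    fun t ht => hv_M _ (hmem t (Ico_subset_Icc_self ht))
  have hlow := mul_le_sub_of_hasDerivWithinAt_Ici_le hT hφ hφ' (C := m * (c - φ T))
    fun t ht => le_trans (mul_le_mul_of_nonneg_left
      (sub_le_sub_left (hmono (Ico_subset_Icc_self ht) hT_mem ht.2.le) c) hm.le) (hvφ t ht)
  rw [abs_of_nonneg (sub_nonneg.2 h0T), abs_of_pos (sub_pos.2 hTc)]
  constructor
  · rw [div_le_iff₀ hM]; linarith
  · rw [le_div_iff₀ (mul_pos hm (sub_pos.2 hTc))]; linarith

theorem hitting_time_bounds_of_gt {m M L : ℝ} (hm : 0 < m) (hM : 0 < M) (hT : 0 ≤ T)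
    (hφ : ContinuousOn φ (Icc 0 T))
    (hφ' : ∀ t ∈ Ico 0 T, HasDerivWithinAt φ (v (φ t)) (Ici t) t) (hφ₀ : φ 0 = x₀) (hc : c < x₀)
    (hv_ge : ∀ x ∈ Ioc c x₀, m * (x - c) ≤ -v x)
    (hv_le : ∀ x ∈ Ioc c x₀, -v x ≤ L * (x - c))
    (hv_M : ∀ x ∈ Ioc c x₀, -v x ≤ M) :
    |φ T - x₀| / M ≤ T ∧ T ≤ |φ T - x₀| / (m * |c - φ T|) := by
  subst hφ₀
  have hneg : ∀ x ∈ Ico (-φ 0) (-c), -x ∈ Ioc c (φ 0) := fun x hx =>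
    ⟨lt_neg_of_lt_neg hx.2, neg_le.1 hx.1⟩
  have := hitting_time_bounds_of_lt (φ := -φ) (v := fun x => -v (-x)) (c := -c)
    hm hM hT hφ.neg (fun t ht => by simpa using (hφ' t ht).neg) rfl (neg_lt_neg hc)
    (fun x hx => by simpa [sub_eq_add_neg, add_comm] using hv_ge _ (hneg x hx))
    (fun x hx => by simpa [sub_eq_add_neg, add_comm] using hv_le _ (hneg x hx))
    fun x hx => hv_M _ (hneg x hx)
  simpa only [Pi.neg_apply, neg_sub_neg, abs_sub_comm] using this

end AutonomousODE

theorem LipschitzOnWith.sub_le_mul_sub {f : ℝ → ℝ} {K : NNReal} {s : Set ℝ}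
    (hf : LipschitzOnWith K f s) {x y : ℝ} (hx : x ∈ s) (hy : y ∈ s) (hxy : x ≤ y) :
    f y - f x ≤ K * (y - x) := by
  have := hf.le_add_mul hy hx
  rw [Real.dist_eq, abs_of_nonneg (sub_nonneg.2 hxy)] at this
  linarith

def substrateRate (D sIn k : ℝ) (μ : ℝ → ℝ) (ℓ x : ℝ) : ℝ :=
  D * (sIn - x) - k * μ x * ℓ

section SubstrateRate

variable {D sIn k ℓ c x K : ℝ} {μ : ℝ → ℝ}

theorem substrateRate_eq_of_eq_zero (hc : substrateRate D sIn k μ ℓ c = 0) :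
    substrateRate D sIn k μ ℓ x = D * (c - x) + k * ℓ * (μ c - μ x) := by
  unfold substrateRate at *
  linarith

theorem mul_sub_le_substrateRate (hc : substrateRate D sIn k μ ℓ c = 0) (hkℓ : 0 ≤ k * ℓ)
    (hx : μ x ≤ μ c) : D * (c - x) ≤ substrateRate D sIn k μ ℓ x := by
  rw [substrateRate_eq_of_eq_zero hc]
  nlinarith

theorem substrateRate_le_mul_sub (hc : substrateRate D sIn k μ ℓ c = 0) (hkℓ : 0 ≤ k * ℓ)
    (hx : μ c - μ x ≤ K * (c - x)) :
    substrateRate D sIn k μ ℓ x ≤ (D + k * ℓ * K) * (c - x) := by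
  rw [substrateRate_eq_of_eq_zero hc]
  nlinarith

theorem substrateRate_le (hD : 0 ≤ D) (hkℓ : 0 ≤ k * ℓ) (hx : 0 ≤ x) (hμx : 0 ≤ μ x) :
    substrateRate D sIn k μ ℓ x ≤ D * sIn := by
  unfold substrateRate
  nlinarith

theorem mul_sub_le_neg_substrateRate (hc : substrateRate D sIn k μ ℓ c = 0) (hkℓ : 0 ≤ k * ℓ)
    (hx : μ c ≤ μ x) : D * (x - c) ≤ -substrateRate D sIn k μ ℓ x := by
  rw [substrateRate_eq_of_eq_zero hc]
  nlinarith

theorem neg_substrateRate_le_mul_sub (hc : substrateRate D sIn k μ ℓ c = 0) (hkℓ : 0 ≤ k * ℓ)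
    (hx : μ x - μ c ≤ K * (x - c)) :
    -substrateRate D sIn k μ ℓ x ≤ (D + k * ℓ * K) * (x - c) := by
  rw [substrateRate_eq_of_eq_zero hc]
  nlinarith

theorem neg_substrateRate_le {b : ℝ} (hD : 0 ≤ D) (hk : 0 ≤ k) (hℓ : 0 ≤ ℓ) (hx : x ≤ sIn)
    (hμx : μ x ≤ μ b) : -substrateRate D sIn k μ ℓ x ≤ k * μ b * ℓ := by
  unfold substrateRate
  have : k * μ x * ℓ ≤ k * μ b * ℓ := by gcongr
  nlinarith

end SubstrateRate

theorem stmt_10_general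
    (D sIn k : ℝ) (μ : ℝ → ℝ)
    (hD : 0 < D) (hsIn : 0 < sIn) (hk : 0 < k)
    (hμC1 : ContDiffOn ℝ 1 μ (Set.Ici 0))
    (hμmono : StrictMonoOn μ (Set.Ici 0))
    (hμ0 : μ 0 = 0)
    (sbar : ℕ → ℝ)
    (hsbar_mem : ∀ ℓ : ℕ, 1 ≤ ℓ → sbar ℓ ∈ Set.Ioo 0 sIn)
    (hsbar_eq : ∀ ℓ : ℕ, 1 ≤ ℓ → D * (sIn - sbar ℓ) - k * μ (sbar ℓ) * (ℓ : ℝ) = 0)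
    (phi : ℕ → ℝ → ℝ → ℝ)
    (hphi_init : ∀ ℓ : ℕ, 1 ≤ ℓ → ∀ s₀ : ℝ, 0 ≤ s₀ → phi ℓ s₀ 0 = s₀)
    (hphi_deriv : ∀ ℓ : ℕ, 1 ≤ ℓ → ∀ s₀ : ℝ, 0 ≤ s₀ → ∀ t : ℝ, 0 ≤ t →
      HasDerivWithinAt (phi ℓ s₀)
        (D * (sIn - phi ℓ s₀ t) - k * μ (phi ℓ s₀ t) * (ℓ : ℝ)) (Set.Ici 0) t) :
    ∀ ℓ : ℕ, 1 ≤ ℓ → ∀ s₀ s : ℝ, s₀ ∈ Set.Icc 0 (sbar 1) → s ∈ Set.Icc 0 (sbar 1) →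
      s₀ ≠ sbar ℓ → ∀ T : ℝ, 0 ≤ T → phi ℓ s₀ T = s →
        |s - s₀| / max (D * sIn) (k * μ (sbar 1) * (ℓ : ℝ)) ≤ T ∧
        T ≤ |s - s₀| / (D * |sbar ℓ - s|) := by
  intro ℓ hℓ s₀ s hs₀ _ hne T hT hφT
  subst hφT
  have hφ₀ : phi ℓ s₀ 0 = s₀ := hphi_init ℓ hℓ s₀ hs₀.1
  have hφ' : ∀ t ∈ Ico 0 T,
      HasDerivWithinAt (phi ℓ s₀) (substrateRate D sIn k μ ℓ (phi ℓ s₀ t)) (Ici t) t :=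
    fun t ht => (hphi_deriv ℓ hℓ s₀ hs₀.1 t ht.1).mono (Ici_subset_Ici.2 ht.1)
  have hφ : ContinuousOn (phi ℓ s₀) (Icc 0 T) := fun t ht =>
    (hphi_deriv ℓ hℓ s₀ hs₀.1 t ht.1).continuousWithinAt.mono Icc_subset_Ici_self
  have hc : substrateRate D sIn k μ ℓ (sbar ℓ) = 0 := hsbar_eq ℓ hℓ
  have hkℓ : 0 ≤ k * ℓ := by positivity
  have hM : 0 < max (D * sIn) (k * μ (sbar 1) * ℓ) := lt_max_of_lt_left (mul_pos hD hsIn)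
  have hμ := hμmono.monotoneOn
  have hcpos := (hsbar_mem ℓ hℓ).1.le
  obtain ⟨hsbar₁_pos, hsbar₁_lt⟩ := hsbar_mem 1 le_rfl
  rcases hne.lt_or_gt with h | h
  · obtain ⟨K, hK⟩ := (hμC1.mono Icc_subset_Ici_self).exists_lipschitzOnWith one_ne_zero
      (convex_Icc 0 (sbar ℓ)) isCompact_Icc
    have hmem : ∀ x ∈ Ico s₀ (sbar ℓ), x ∈ Icc 0 (sbar ℓ) := fun x hx => ⟨hs₀.1.trans hx.1, hx.2.le⟩
    exact hitting_time_bounds_of_lt hD hM hT hφ hφ' hφ₀ h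
      (fun x hx => mul_sub_le_substrateRate hc hkℓ (hμ (hmem x hx).1 hcpos hx.2.le))
      (fun x hx => substrateRate_le_mul_sub hc hkℓ
        (hK.sub_le_mul_sub (hmem x hx) (right_mem_Icc.2 hcpos) hx.2.le))
      fun x hx => (substrateRate_le hD.le hkℓ (hmem x hx).1
        (hμ0 ▸ hμ self_mem_Ici (hmem x hx).1 (hmem x hx).1)).trans (le_max_left _ _)
  · obtain ⟨K, hK⟩ := (hμC1.mono Icc_subset_Ici_self).exists_lipschitzOnWith one_ne_zero
      (convex_Icc 0 s₀) isCompact_Icc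
    have hmem : ∀ x ∈ Ioc (sbar ℓ) s₀, x ∈ Icc 0 s₀ := fun x hx => ⟨hcpos.trans hx.1.le, hx.2⟩
    exact hitting_time_bounds_of_gt hD hM hT hφ hφ' hφ₀ h
      (fun x hx => mul_sub_le_neg_substrateRate hc hkℓ (hμ hcpos (hmem x hx).1 hx.1.le))
      (fun x hx => neg_substrateRate_le_mul_sub hc hkℓ
        (hK.sub_le_mul_sub ⟨hcpos, h.le⟩ (hmem x hx) hx.1.le))
      fun x hx => (neg_substrateRate_le hD.le hk.le (by positivity)
        (hx.2.trans (hs₀.2.trans hsbar₁_lt.le))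
        (hμ (hmem x hx).1 hsbar₁_pos.le (hx.2.trans hs₀.2))).trans (le_max_right _ _)

/-- Bounds on the hitting time of the flow: if s₀, s ∈ [0, s̄₁], s₀ ≠ s̄_ℓ and
φ(ℓ, s₀, T) = s with T ≥ 0, then
|s − s₀| / max(D s_in, k μ(s̄₁) ℓ) ≤ T ≤ |s − s₀| / (D |s̄_ℓ − s|). -/
theorem stmt_10
    (D sIn k : ℝ) (μ : ℝ → ℝ)
    (hD : 0 < D) (hsIn : 0 < sIn) (hk : 0 < k)
    (hμC1 : ContDiffOn ℝ 1 μ (Set.Ici 0))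
    (hμmono : StrictMonoOn μ (Set.Ici 0))
    (hμ0 : μ 0 = 0)
    (hμpos : ∀ s : ℝ, 0 < s → 0 < μ s)
    (sbar : ℕ → ℝ)
    (hsbar_mem : ∀ ℓ : ℕ, 1 ≤ ℓ → sbar ℓ ∈ Set.Ioo 0 sIn)
    (hsbar_eq : ∀ ℓ : ℕ, 1 ≤ ℓ → D * (sIn - sbar ℓ) - k * μ (sbar ℓ) * (ℓ : ℝ) = 0)
    (phi : ℕ → ℝ → ℝ → ℝ)
    (hphi_init : ∀ ℓ : ℕ, 1 ≤ ℓ → ∀ s₀ : ℝ, 0 ≤ s₀ → phi ℓ s₀ 0 = s₀)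
    (hphi_deriv : ∀ ℓ : ℕ, 1 ≤ ℓ → ∀ s₀ : ℝ, 0 ≤ s₀ → ∀ t : ℝ, 0 ≤ t →
      HasDerivWithinAt (phi ℓ s₀)
        (D * (sIn - phi ℓ s₀ t) - k * μ (phi ℓ s₀ t) * (ℓ : ℝ)) (Set.Ici 0) t) :
    ∀ ℓ : ℕ, 1 ≤ ℓ → ∀ s₀ s : ℝ, s₀ ∈ Set.Icc 0 (sbar 1) → s ∈ Set.Icc 0 (sbar 1) →
      s₀ ≠ sbar ℓ → ∀ T : ℝ, 0 ≤ T → phi ℓ s₀ T = s →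
        |s - s₀| / max (D * sIn) (k * μ (sbar 1) * (ℓ : ℝ)) ≤ T ∧
        T ≤ |s - s₀| / (D * |sbar ℓ - s|) :=
  stmt_10_general D sIn k μ hD hsIn hk hμC1 hμmono hμ0 sbar hsbar_mem hsbar_eq phi hphi_init
    hphi_deriv
end

section
/- For every positive integer ℓ, every s₀ > 0 and every ε ≥ 0, writing s = φ(ℓ, s₀, ε), one has D · |s − s̄_ℓ| · ε ≤ |s − s₀|. -/
open Set Filter Topology

/-- Positivity of the trajectory: a barrier argument at 0. -/
lemma aux_pos_traj (D sIn k l : ℝ) (μ : ℝ → ℝ)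
    (hD : 0 < D) (hsIn : 0 < sIn) (hμ0 : μ 0 = 0)
    (x : ℝ → ℝ) (hx0 : 0 < x 0)
    (hderiv : ∀ t : ℝ, 0 ≤ t →
      HasDerivWithinAt x (D * (sIn - x t) - k * μ (x t) * l) (Set.Ici 0) t) :
    ∀ t : ℝ, 0 ≤ t → 0 < x t := by
  have hcont : ContinuousOn x (Ici 0) := fun t ht => (hderiv t ht).continuousWithinAt
  by_contra h
  push_neg at h
  obtain ⟨t₁, ht₁, hxt₁⟩ := h
  set S : Set ℝ := Icc 0 t₁ ∩ x ⁻¹' Iic 0 with hS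
  have hSclosed : IsClosed S :=
    (hcont.mono (Icc_subset_Ici_self)).preimage_isClosed_of_isClosed isClosed_Icc isClosed_Iic
  have ht₁S : t₁ ∈ S := ⟨⟨ht₁, le_refl _⟩, hxt₁⟩
  have hSne : S.Nonempty := ⟨t₁, ht₁S⟩
  have hSbdd : BddBelow S := ⟨0, fun u hu => hu.1.1⟩
  set c := sInf S with hc
  have hcS : c ∈ S := hSclosed.csInf_mem hSne hSbdd
  have hc0 : 0 ≤ c := hcS.1.1
  have hcpos : 0 < c := by
    rcases hc0.lt_or_eq with h' | h'
    · exact h'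
    · exfalso; rw [← h'] at hcS; exact absurd hcS.2 (by simpa using hx0)
  have hxcle : x c ≤ 0 := hcS.2
  have hxc : x c = 0 := by
    rcases hxcle.lt_or_eq with h' | h'
    · exfalso
      -- IVT on [0, c] gives an earlier zero
      have hIVT := intermediate_value_Icc' hc0 (hcont.mono (Icc_subset_Ici_self))
      have h0mem : (0:ℝ) ∈ Icc (x c) (x 0) := ⟨h'.le, hx0.le⟩
      obtain ⟨u, huIcc, hxu⟩ := hIVT h0mem
      have huS : u ∈ S := ⟨⟨huIcc.1, le_trans huIcc.2 hcS.1.2⟩, hxu.le⟩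
      have hcu : c ≤ u := csInf_le hSbdd huS
      have hue : u = c := le_antisymm huIcc.2 hcu
      rw [hue] at hxu
      exact h'.ne hxu
    · exact h'
  -- derivative at c is D * sIn > 0
  have hdc : HasDerivAt x (D * sIn) c := by
    have := (hderiv c hc0).hasDerivAt (Ici_mem_nhds hcpos)
    simpa [hxc, hμ0] using this
  have hslope := hasDerivAt_iff_tendsto_slope.1 hdc
  have hslope' : Tendsto (slope x c) (𝓝[<] c) (𝓝 (D * sIn)) :=
    hslope.mono_left (nhdsWithin_mono _ (fun u hu => ne_of_lt hu))
  have hev : ∀ᶠ u in 𝓝[<] c, 0 < slope x c u :=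
    hslope'.eventually (eventually_gt_nhds (by positivity))
  have hev2 : Ioo 0 c ∈ 𝓝[<] c := Ioo_mem_nhdsLT hcpos
  obtain ⟨u, hu1, hu2⟩ := (hev.and (eventually_mem_nhdsWithin.and (eventually_of_mem hev2 (fun y hy => hy)))).exists
  obtain ⟨huc, huIoo⟩ := hu2
  -- slope positive and u < c forces x u < x c = 0
  have hxu : x u < 0 := by
    have hlt : u - c < 0 := sub_neg.2 huIoo.2
    have hne : u - c ≠ 0 := hlt.ne
    have heq : x u - x c = slope x c u * (u - c) := by
      rw [slope_def_field]; field_simp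
    have : x u = slope x c u * (u - c) := by rw [hxc] at heq; linarith
    rw [this]
    exact mul_neg_of_pos_of_neg hu1 hlt
  have huS : u ∈ S := ⟨⟨huIoo.1.le, le_trans huIoo.2.le hcS.1.2⟩, hxu.le⟩
  exact absurd (csInf_le hSbdd huS) (not_le.2 huIoo.2)

/-- Lower displacement bound for the flow: for s₀ > 0 and ε ≥ 0, writing
s = φ(ℓ, s₀, ε), one has D · |s − s̄_ℓ| · ε ≤ |s − s₀|. -/
theorem stmt_12
    (D sIn k : ℝ) (μ : ℝ → ℝ)
    (hD : 0 < D) (hsIn : 0 < sIn) (hk : 0 < k)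
    (hμC1 : ContDiffOn ℝ 1 μ (Set.Ici 0))
    (hμmono : StrictMonoOn μ (Set.Ici 0))
    (hμ0 : μ 0 = 0)
    (hμpos : ∀ s : ℝ, 0 < s → 0 < μ s)
    (sbar : ℕ → ℝ)
    (hsbar_mem : ∀ ℓ : ℕ, 1 ≤ ℓ → sbar ℓ ∈ Set.Ioo 0 sIn)
    (hsbar_eq : ∀ ℓ : ℕ, 1 ≤ ℓ → D * (sIn - sbar ℓ) - k * μ (sbar ℓ) * (ℓ : ℝ) = 0)
    (phi : ℕ → ℝ → ℝ → ℝ)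
    (hphi_init : ∀ ℓ : ℕ, 1 ≤ ℓ → ∀ s₀ : ℝ, 0 ≤ s₀ → phi ℓ s₀ 0 = s₀)
    (hphi_deriv : ∀ ℓ : ℕ, 1 ≤ ℓ → ∀ s₀ : ℝ, 0 ≤ s₀ → ∀ t : ℝ, 0 ≤ t →
      HasDerivWithinAt (phi ℓ s₀)
        (D * (sIn - phi ℓ s₀ t) - k * μ (phi ℓ s₀ t) * (ℓ : ℝ)) (Set.Ici 0) t) :
    ∀ ℓ : ℕ, 1 ≤ ℓ → ∀ s₀ : ℝ, 0 < s₀ → ∀ ε : ℝ, 0 ≤ ε →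
      D * |phi ℓ s₀ ε - sbar ℓ| * ε ≤ |phi ℓ s₀ ε - s₀| := by
  intro ℓ hℓ s₀ hs₀ ε hε
  set x : ℝ → ℝ := phi ℓ s₀ with hxdef
  set F : ℝ → ℝ := fun s => D * (sIn - s) - k * μ s * (ℓ : ℝ) with hF
  have hx0 : x 0 = s₀ := hphi_init ℓ hℓ s₀ hs₀.le
  have hxd : ∀ t : ℝ, 0 ≤ t → HasDerivWithinAt x (F (x t)) (Set.Ici 0) t :=
    fun t ht => hphi_deriv ℓ hℓ s₀ hs₀.le t ht
  have hxcont : ContinuousOn x (Set.Ici 0) := fun t ht => (hxd t ht).continuousWithinAt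
  have hxpos : ∀ t : ℝ, 0 ≤ t → 0 < x t := by
    apply aux_pos_traj D sIn k (ℓ : ℝ) μ hD hsIn hμ0 x (by rw [hx0]; exact hs₀)
    exact fun t ht => hxd t ht
  set sb := sbar ℓ with hsb
  have hsbm : sb ∈ Set.Ioo 0 sIn := hsbar_mem ℓ hℓ
  have hFsb : F sb = 0 := hsbar_eq ℓ hℓ
  have hμm : MonotoneOn μ (Set.Ici 0) := hμmono.monotoneOn
  have hkey : ∀ a b : ℝ, 0 ≤ a → 0 ≤ b → (a - b) * (F a - F b) ≤ -(D * (a - b) ^ 2) := by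
    intro a b ha hb
    have hμab : 0 ≤ (a - b) * (μ a - μ b) := by
      rcases le_total a b with h | h
      · nlinarith [hμm ha hb h]
      · nlinarith [hμm hb ha h]
    have hkl : (0:ℝ) ≤ k * (ℓ : ℝ) := mul_nonneg hk.le (Nat.cast_nonneg ℓ)
    simp only [hF]
    nlinarith [mul_nonneg hkl hμab]
  have hdat : ∀ t : ℝ, 0 < t → HasDerivAt x (F (x t)) t :=
    fun t ht => (hxd t ht.le).hasDerivAt (Ici_mem_nhds ht)
  have hcontIcc : ContinuousOn x (Set.Icc 0 ε) := hxcont.mono Set.Icc_subset_Ici_self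
  have hεm : ε ∈ Set.Icc (0:ℝ) ε := Set.right_mem_Icc.2 hε
  have h0m : (0:ℝ) ∈ Set.Icc (0:ℝ) ε := Set.left_mem_Icc.2 hε
  by_cases hhit : ∃ t₀ ∈ Set.Icc 0 ε, x t₀ = sb
  · obtain ⟨t₀, ht₀, hxt₀⟩ := hhit
    have hg : AntitoneOn (fun t => (x t - sb) ^ 2) (Set.Icc 0 ε) := by
      apply antitoneOn_of_deriv_nonpos (convex_Icc 0 ε)
      · exact (hcontIcc.sub continuousOn_const).pow 2
      · intro t ht
        rw [interior_Icc] at ht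
        exact (((hdat t ht.1).sub_const sb).pow 2).differentiableAt.differentiableWithinAt
      · intro t ht
        rw [interior_Icc] at ht
        have hd : HasDerivAt (fun u => (x u - sb) ^ 2)
            (((2:ℕ) : ℝ) * (x t - sb) ^ (2 - 1) * F (x t)) t :=
          ((hdat t ht.1).sub_const sb).pow 2
        rw [hd.deriv]
        have hk1 := hkey (x t) sb (hxpos t ht.1.le).le hsbm.1.le
        rw [hFsb] at hk1
        have hD2 : (0:ℝ) ≤ D * (x t - sb) ^ 2 := by positivity
        push_cast
        nlinarith
    have hxε : x ε = sb := by
      have h1 : (x ε - sb) ^ 2 ≤ (x t₀ - sb) ^ 2 := hg ht₀ hεm ht₀.2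
      rw [hxt₀] at h1
      have h2 : (x ε - sb) ^ 2 ≤ 0 := by simpa using h1
      nlinarith [sq_nonneg (x ε - sb)]
    rw [hxε]
    simp [abs_nonneg]
  · push_neg at hhit
    have h0ne : s₀ ≠ sb := by rw [← hx0]; exact hhit 0 h0m
    rcases h0ne.lt_or_gt with hlt | hgt
    · -- s₀ < sb : trajectory stays below sb and increases
      have hall : ∀ t ∈ Set.Icc 0 ε, x t < sb := by
        intro t ht
        by_contra hcon
        push_neg at hcon
        rcases hcon.lt_or_eq with h' | h'
        · obtain ⟨u, huIcc, hxu⟩ := intermediate_value_Icc ht.1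
            (hcontIcc.mono (Set.Icc_subset_Icc_right ht.2))
            ⟨by rw [hx0]; exact hlt.le, h'.le⟩
          exact hhit u ⟨huIcc.1, le_trans huIcc.2 ht.2⟩ hxu
        · exact hhit t ht h'.symm
      have hFt : ∀ t ∈ Set.Icc 0 ε, D * (sb - x t) ≤ F (x t) := by
        intro t ht
        have hk1 := hkey (x t) sb (hxpos t ht.1).le hsbm.1.le
        rw [hFsb] at hk1
        have hx : x t - sb < 0 := by linarith [hall t ht]
        nlinarith
      have hmono : MonotoneOn x (Set.Icc 0 ε) := by
        apply monotoneOn_of_deriv_nonneg (convex_Icc 0 ε) hcontIcc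
        · intro t ht; rw [interior_Icc] at ht
          exact (hdat t ht.1).differentiableAt.differentiableWithinAt
        · intro t ht; rw [interior_Icc] at ht
          rw [(hdat t ht.1).deriv]
          have h1 := hFt t ⟨ht.1.le, ht.2.le⟩
          have h2 := hall t ⟨ht.1.le, ht.2.le⟩
          nlinarith
      have hmon2 : MonotoneOn (fun t => x t - s₀ - D * (sb - x ε) * t) (Set.Icc 0 ε) := by
        apply monotoneOn_of_deriv_nonneg (convex_Icc 0 ε)
        · exact (hcontIcc.sub continuousOn_const).sub (continuousOn_const.mul continuousOn_id)
        · intro t ht; rw [interior_Icc] at ht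
          exact (((hdat t ht.1).sub_const s₀).sub
            ((hasDerivAt_id t).const_mul (D * (sb - x ε)))).differentiableAt.differentiableWithinAt
        · intro t ht; rw [interior_Icc] at ht
          have hd : HasDerivAt (fun u => x u - s₀ - D * (sb - x ε) * u)
              (F (x t) - D * (sb - x ε) * 1) t :=
            ((hdat t ht.1).sub_const s₀).sub ((hasDerivAt_id t).const_mul (D * (sb - x ε)))
          rw [hd.deriv]
          have h1 := hFt t ⟨ht.1.le, ht.2.le⟩
          have h3 : x t ≤ x ε := hmono ⟨ht.1.le, ht.2.le⟩ hεm ht.2.le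
          have h4 : D * (sb - x ε) ≤ D * (sb - x t) := by nlinarith
          linarith
      have hfin : x 0 - s₀ - D * (sb - x ε) * 0 ≤ x ε - s₀ - D * (sb - x ε) * ε :=
        hmon2 h0m hεm hε
      rw [hx0] at hfin
      have hxεlt : x ε < sb := hall ε hεm
      have hxεge : s₀ ≤ x ε := by
        have := hmono h0m hεm hε; rw [hx0] at this; exact this
      rw [abs_of_nonpos (by linarith), abs_of_nonneg (by linarith)]
      nlinarith
    · -- sb < s₀ : trajectory stays above sb and decreases
      have hall : ∀ t ∈ Set.Icc 0 ε, sb < x t := by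
        intro t ht
        by_contra hcon
        push_neg at hcon
        rcases hcon.lt_or_eq with h' | h'
        · obtain ⟨u, huIcc, hxu⟩ := intermediate_value_Icc' ht.1
            (hcontIcc.mono (Set.Icc_subset_Icc_right ht.2))
            ⟨h'.le, by rw [hx0]; exact hgt.le⟩
          exact hhit u ⟨huIcc.1, le_trans huIcc.2 ht.2⟩ hxu
        · exact hhit t ht h'
      have hFt : ∀ t ∈ Set.Icc 0 ε, F (x t) ≤ -(D * (x t - sb)) := by
        intro t ht
        have hk1 := hkey (x t) sb (hxpos t ht.1).le hsbm.1.le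
        rw [hFsb] at hk1
        have hx : 0 < x t - sb := by linarith [hall t ht]
        nlinarith
      have hmono : AntitoneOn x (Set.Icc 0 ε) := by
        apply antitoneOn_of_deriv_nonpos (convex_Icc 0 ε) hcontIcc
        · intro t ht; rw [interior_Icc] at ht
          exact (hdat t ht.1).differentiableAt.differentiableWithinAt
        · intro t ht; rw [interior_Icc] at ht
          rw [(hdat t ht.1).deriv]
          have h1 := hFt t ⟨ht.1.le, ht.2.le⟩
          have h2 := hall t ⟨ht.1.le, ht.2.le⟩
          nlinarith
      have hmon2 : MonotoneOn (fun t => s₀ - x t - D * (x ε - sb) * t) (Set.Icc 0 ε) := by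
        apply monotoneOn_of_deriv_nonneg (convex_Icc 0 ε)
        · exact (continuousOn_const.sub hcontIcc).sub (continuousOn_const.mul continuousOn_id)
        · intro t ht; rw [interior_Icc] at ht
          exact (((hdat t ht.1).const_sub s₀).sub
            ((hasDerivAt_id t).const_mul (D * (x ε - sb)))).differentiableAt.differentiableWithinAt
        · intro t ht; rw [interior_Icc] at ht
          have hd : HasDerivAt (fun u => s₀ - x u - D * (x ε - sb) * u)
              (-F (x t) - D * (x ε - sb) * 1) t :=
            ((hdat t ht.1).const_sub s₀).sub ((hasDerivAt_id t).const_mul (D * (x ε - sb)))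
          rw [hd.deriv]
          have h1 := hFt t ⟨ht.1.le, ht.2.le⟩
          have h3 : x ε ≤ x t := hmono ⟨ht.1.le, ht.2.le⟩ hεm ht.2.le
          have h4 : D * (x ε - sb) ≤ D * (x t - sb) := by nlinarith
          linarith
      have hfin : s₀ - x 0 - D * (x ε - sb) * 0 ≤ s₀ - x ε - D * (x ε - sb) * ε :=
        hmon2 h0m hεm hε
      rw [hx0] at hfin
      have hxεgt : sb < x ε := hall ε hεm
      have hxεle : x ε ≤ s₀ := by
        have := hmono h0m hεm hε; rw [hx0] at this; exact this
      rw [abs_of_nonneg (by linarith), abs_of_nonpos (by linarith)]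
      nlinarith
end

section
/- Let t > 0 and 0 < s ≤ s̄₁, and define h(v) = φ(1, φ(2, s, v), t − v) for v ∈ [0, t] (the substrate concentration at time t if the population has 2 bacteria on [0, v] and 1 bacterium on [v, t]). Then h is strictly decreasing on [0, t], and for all 0 ≤ v₁ ≤ v₂ ≤ t one has h(v₁) − h(v₂) ≤ (D·s_in + 2·k·μ(s̄₁))·(v₂ − v₁). -/
/-!
Write `q = φ(2, s, ·)` and `r = φ(1, q v₁, · - v₁)`, so that `h v₁ = r t` and
`h v₂ = φ(1, q v₂, t - v₂)`. Every trajectory involved stays in `[min s s̄₂, s̄₁]`, where both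
vector fields are decreasing. On `[v₁, v₂]` the difference `r - q` starts at `0` and its
derivative lies between `k μ(min s s̄₂) - L (r - q)` (with `L` a Lipschitz constant of the
one-bacterium field) and `D s_in + 2 k μ(s̄₁)`, so at time `v₂` it is positive and at most
`(D s_in + 2 k μ(s̄₁)) (v₂ - v₁)`. On `[v₂, t]` both trajectories follow the same decreasing,
Lipschitz field, which keeps the gap positive (Gronwall) without widening it. Each comparison is
a fencing argument against a slightly tilted barrier.
-/

open Set Filter Topology

theorem image_le_of_deriv_le_deriv_near_boundary {σ τ σ' τ' : ℝ → ℝ} {a b c : ℝ} (hc : 0 < c)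
    (hσ : ∀ x ∈ Icc a b, HasDerivWithinAt σ (σ' x) (Icc a b) x)
    (hτ : ∀ x ∈ Icc a b, HasDerivWithinAt τ (τ' x) (Icc a b) x)
    (ha : σ a ≤ τ a)
    (bound : ∀ x ∈ Ico a b, τ x ≤ σ x → σ x < τ x + c → σ' x ≤ τ' x) :
    ∀ x ∈ Icc a b, σ x ≤ τ x := by
  intro x hx
  have hright : ∀ {g g' : ℝ → ℝ}, (∀ x ∈ Icc a b, HasDerivWithinAt g (g' x) (Icc a b) x) →
      ∀ x ∈ Ico a b, HasDerivWithinAt g (g' x) (Ici x) x := fun h x hx =>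
    (h x (Ico_subset_Icc_self hx)).mono_of_mem_nhdsWithin (Icc_mem_nhdsGE_of_mem hx)
  have hba : 0 < b - a + 1 := by linarith [hx.1.trans hx.2]
  -- `σ` can only touch the fence `τ + ε (· - a + 1)` at points where it is `c`-close to `τ`
  have hfence : ∀ ε ∈ Ioo 0 (c / (b - a + 1)), σ x ≤ τ x + ε * (x - a + 1) := by
    rintro ε ⟨hε, hεc⟩
    rw [lt_div_iff₀ hba] at hεc
    have hB : ∀ y ∈ Icc a b, HasDerivWithinAt (fun y => τ y + ε * (y - a + 1))
        (τ' y + ε) (Icc a b) y := fun y hy => by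
      simpa using
        (hτ y hy).fun_add ((((hasDerivWithinAt_id y _).sub_const a).add_const 1).const_mul ε)
    refine image_le_of_deriv_right_lt_deriv_boundary' (fun y hy => (hσ y hy).continuousWithinAt)
      (hright hσ) (by nlinarith) (fun y hy => (hB y hy).continuousWithinAt) (hright hB)
      (fun y hy hyB => ?_) hx
    have := bound y hy (by rw [hyB]; nlinarith [hy.1]) (by rw [hyB]; nlinarith [hy.2])
    linarith
  have hlim : Tendsto (fun ε => τ x + ε * (x - a + 1)) (𝓝[>] 0) (𝓝 (τ x)) := by
    have := ((continuous_const.add (continuous_id.mul continuous_const)).tendsto (0:ℝ)).mono_left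
      (nhdsWithin_le_nhds (s := Ioi 0)) (f := fun ε : ℝ => τ x + ε * (x - a + 1))
    simpa using this
  exact ge_of_tendsto hlim (eventually_of_mem (Ioo_mem_nhdsGT (div_pos hc hba)) hfence)

theorem add_mul_le_mul_exp_of_le_deriv {w w' : ℝ → ℝ} {a b κ L : ℝ} (hκ : 0 ≤ κ) (hL : 0 ≤ L)
    (hab : a ≤ b) (hw : ∀ x ∈ Icc a b, HasDerivWithinAt w (w' x) (Icc a b) x)
    (hbound : ∀ x ∈ Ico a b, κ - L * w x ≤ w' x) :
    w a + κ * (b - a) ≤ w b * Real.exp (L * (b - a)) := by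
  have hlin : ∀ x ∈ Icc a b, HasDerivWithinAt (fun x => w a + κ * (x - a)) κ (Icc a b) x :=
    fun x _ => by simpa using (((hasDerivWithinAt_id x _).sub_const a).const_mul κ).const_add (w a)
  have hexp : ∀ x ∈ Icc a b, HasDerivWithinAt (fun x => w x * Real.exp (L * (x - a)))
      ((w' x + L * w x) * Real.exp (L * (x - a))) (Icc a b) x := fun x hx =>
    ((hw x hx).mul (((hasDerivWithinAt_id x _).sub_const a).const_mul L).exp).congr_deriv
      (by simp only [id]; ring)
  have key := image_le_of_deriv_le_deriv_near_boundary one_pos hlin hexp (by simp) ?_ b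
    (right_mem_Icc.2 hab)
  · simpa using key
  -- `w e^{L (x - a)}` grows at rate `(w' + L w) e^{L (x - a)} ≥ κ`
  intro x hx _ _
  have h1 : 1 ≤ Real.exp (L * (x - a)) := Real.one_le_exp (mul_nonneg hL (by linarith [hx.1]))
  nlinarith [hbound x hx]

def SolvesOn (f y : ℝ → ℝ) (s : Set ℝ) : Prop :=
  ∀ x ∈ s, HasDerivWithinAt y (f (y x)) s x

namespace SolvesOn

variable {f g y z : ℝ → ℝ} {s : Set ℝ} {a b : ℝ}

theorem mono {t : Set ℝ} (h : SolvesOn f y s) (hts : t ⊆ s) : SolvesOn f y t :=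
  fun x hx => (h x (hts hx)).mono hts

theorem comp_sub_const (h : SolvesOn f y (Ici 0)) (c : ℝ) :
    SolvesOn f (fun u => y (u - c)) (Ici c) := fun x hx => by
  have hmaps : MapsTo (fun u => u - c) (Ici c) (Ici 0) := fun u hu => by simpa using hu
  exact ((h (x - c) (hmaps hx)).comp x ((hasDerivWithinAt_id x _).sub_const c) hmaps).congr_deriv
    (mul_one _)

theorem mapsTo_Icc {lo hi : ℝ} (hf : AntitoneOn f (Ioi 0)) (hy : SolvesOn f y (Ici a))
    (hlo : 0 < lo) (hflo : 0 ≤ f lo) (hfhi : f hi ≤ 0) (hya : y a ∈ Icc lo hi) :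
    MapsTo y (Ici a) (Icc lo hi) := by
  have hhi : 0 < hi := hlo.trans_le (hya.1.trans hya.2)
  intro x hx
  have hy' : SolvesOn f y (Icc a x) := hy.mono Icc_subset_Ici_self
  have hconst : ∀ c : ℝ, ∀ u ∈ Icc a x, HasDerivWithinAt (fun _ => c) 0 (Icc a x) u :=
    fun c u _ => hasDerivWithinAt_const u _ c
  constructor
  · refine image_le_of_deriv_le_deriv_near_boundary hlo (hconst lo) hy' hya.1
      (fun u _ hle hlt => ?_) x ⟨hx, le_rfl⟩
    exact hflo.trans (hf (by simp; linarith) hlo hle)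
  · refine image_le_of_deriv_le_deriv_near_boundary one_pos hy' (hconst hi) hya.2
      (fun u _ hle _ => ?_) x ⟨hx, le_rfl⟩
    exact (hf hhi (hhi.trans_le hle) hle).trans hfhi

theorem le_of_le_of_antitoneOn (hf : AntitoneOn f s) (hy : SolvesOn g y (Icc a b))
    (hz : SolvesOn f z (Icc a b)) (hys : MapsTo y (Icc a b) s) (hzs : MapsTo z (Icc a b) s)
    (hgf : ∀ x ∈ s, g x ≤ f x) (ha : y a ≤ z a) : ∀ x ∈ Icc a b, y x ≤ z x :=
  image_le_of_deriv_le_deriv_near_boundary one_pos hy hz ha fun _ hx hzy _ =>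
    (hgf _ (hys (Ico_subset_Icc_self hx))).trans
      (hf (hzs (Ico_subset_Icc_self hx)) (hys (Ico_subset_Icc_self hx)) hzy)

theorem sub_le_sub_add_mul {C : ℝ} (hf : AntitoneOn f s) (hy : SolvesOn g y (Icc a b))
    (hz : SolvesOn f z (Icc a b)) (hys : MapsTo y (Icc a b) s) (hzs : MapsTo z (Icc a b) s)
    (hgf : ∀ x ∈ s, g x ≤ f x) (hC : ∀ u ∈ s, ∀ v ∈ s, u ≤ v → f v - g u ≤ C)
    (ha : y a ≤ z a) (hab : a ≤ b) : z b - y b ≤ z a - y a + C * (b - a) := by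
  have hyz := hy.le_of_le_of_antitoneOn hf hz hys hzs hgf ha
  have hlin : ∀ x ∈ Icc a b,
      HasDerivWithinAt (fun x => z a - y a + C * (x - a)) C (Icc a b) x := fun x _ => by
    simpa using (((hasDerivWithinAt_id x _).sub_const a).const_mul C).const_add (z a - y a)
  refine image_le_of_deriv_le_deriv_near_boundary one_pos (fun x hx => (hz x hx).sub (hy x hx))
    hlin (by simp) (fun x hx _ _ => ?_) b (right_mem_Icc.2 hab)
  have hx' := Ico_subset_Icc_self hx
  exact hC _ (hys hx') _ (hzs hx') (hyz x hx')

theorem sub_add_mul_le_sub_mul_exp {κ : ℝ} {L : NNReal} (hf : AntitoneOn f s)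
    (hL : LipschitzOnWith L f s) (hy : SolvesOn g y (Icc a b)) (hz : SolvesOn f z (Icc a b))
    (hys : MapsTo y (Icc a b) s) (hzs : MapsTo z (Icc a b) s) (hgf : ∀ x ∈ s, g x + κ ≤ f x)
    (hκ : 0 ≤ κ) (ha : y a ≤ z a) (hab : a ≤ b) :
    z a - y a + κ * (b - a) ≤ (z b - y b) * Real.exp (L * (b - a)) := by
  have hyz := hy.le_of_le_of_antitoneOn hf hz hys hzs (fun x hx => by linarith [hgf x hx]) ha
  refine add_mul_le_mul_exp_of_le_deriv hκ L.coe_nonneg hab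
    (fun x hx => (hz x hx).sub (hy x hx)) (fun x hx => ?_)
  have hx' := Ico_subset_Icc_self hx
  have hLip := hL.dist_le_mul _ (hzs hx') _ (hys hx')
  rw [Real.dist_eq, Real.dist_eq, abs_of_nonneg (sub_nonneg.2 (hyz x hx'))] at hLip
  simp only [Pi.sub_apply]
  linarith [(abs_le.1 hLip).1, hgf _ (hys hx')]

end SolvesOn

theorem sub_pos_and_sub_le_of_switch {f g q r Q : ℝ → ℝ} {s : Set ℝ} {L : NNReal} {κ C a b c : ℝ}
    (hf : AntitoneOn f s) (hL : LipschitzOnWith L f s)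
    (hq : SolvesOn g q (Icc a b)) (hr : SolvesOn f r (Icc a c)) (hQ : SolvesOn f Q (Icc b c))
    (hqs : MapsTo q (Icc a b) s) (hrs : MapsTo r (Icc a c) s) (hQs : MapsTo Q (Icc b c) s)
    (hgf : ∀ x ∈ s, g x + κ ≤ f x) (hκ : 0 < κ) (hC : ∀ u ∈ s, ∀ v ∈ s, f v - g u ≤ C)
    (hra : r a = q a) (hQb : Q b = q b) (hab : a < b) (hbc : b ≤ c) :
    0 < r c - Q c ∧ r c - Q c ≤ C * (b - a) := by
  have hsub₁ : Icc a b ⊆ Icc a c := Icc_subset_Icc_right hbc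
  have hsub₂ : Icc b c ⊆ Icc a c := Icc_subset_Icc_left hab.le
  have hr₁ := hr.mono hsub₁
  have hr₂ := hr.mono hsub₂
  have hrs₁ := hrs.mono_left hsub₁
  have hrs₂ := hrs.mono_left hsub₂
  have hgf' : ∀ x ∈ s, g x ≤ f x := fun x hx => by linarith [hgf x hx]
  have hgap_pos : 0 < r b - q b := by
    have h := hq.sub_add_mul_le_sub_mul_exp hf hL hr₁ hqs hrs₁ hgf hκ.le hra.ge hab.le
    rw [hra, sub_self, zero_add] at h
    exact (mul_pos_iff_of_pos_right (Real.exp_pos _)).1 ((mul_pos hκ (sub_pos.2 hab)).trans_le h)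
  have hgap_le : r b - q b ≤ C * (b - a) := by
    have h := hq.sub_le_sub_add_mul hf hr₁ hqs hrs₁ hgf' (fun u hu v hv _ => hC u hu v hv)
      hra.ge hab.le
    rwa [hra, sub_self, zero_add] at h
  rw [← hQb] at hgap_pos hgap_le
  have hflow_pos : 0 < r c - Q c := by
    have h := hQ.sub_add_mul_le_sub_mul_exp hf hL hr₂ hQs hrs₂ (fun x _ => (add_zero _).le)
      le_rfl (sub_nonneg.1 hgap_pos.le) hbc
    rw [zero_mul, add_zero] at h
    exact (mul_pos_iff_of_pos_right (Real.exp_pos _)).1 (hgap_pos.trans_le h)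
  have hflow_le : r c - Q c ≤ r b - Q b := by
    have h := hQ.sub_le_sub_add_mul hf hr₂ hQs hrs₂ (fun x _ => le_rfl)
      (fun u hu v hv huv => sub_nonpos.2 (hf hu hv huv)) (sub_nonneg.1 hgap_pos.le) hbc
    rwa [zero_mul, add_zero] at h
  exact ⟨hflow_pos, hflow_le.trans hgap_le⟩

theorem sub_pos_and_sub_le_of_switch_flow {f g q : ℝ → ℝ} {p : ℝ → ℝ → ℝ} {s : Set ℝ}
    {L : NNReal} {κ C a b c : ℝ} (hf : AntitoneOn f s) (hL : LipschitzOnWith L f s)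
    (hq : SolvesOn g q (Ici 0)) (hp : ∀ x ∈ s, SolvesOn f (p x) (Ici 0))
    (hp₀ : ∀ x ∈ s, p x 0 = x) (hqs : MapsTo q (Ici 0) s) (hps : ∀ x ∈ s, MapsTo (p x) (Ici 0) s)
    (hgf : ∀ x ∈ s, g x + κ ≤ f x) (hκ : 0 < κ) (hC : ∀ u ∈ s, ∀ v ∈ s, f v - g u ≤ C)
    (ha : 0 ≤ a) (hab : a < b) (hbc : b ≤ c) :
    0 < p (q a) (c - a) - p (q b) (c - b) ∧
      p (q a) (c - a) - p (q b) (c - b) ≤ C * (b - a) := by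
  have hqa := hqs ha
  have hqb := hqs (ha.trans hab.le)
  have hshift : ∀ x ∈ s, ∀ d e : ℝ, SolvesOn f (fun u => p x (u - d)) (Icc d e) ∧
      MapsTo (fun u => p x (u - d)) (Icc d e) s := fun x hx d e =>
    ⟨((hp x hx).comp_sub_const d).mono Icc_subset_Ici_self,
      fun u hu => hps x hx (sub_nonneg.2 hu.1)⟩
  obtain ⟨hr, hrs⟩ := hshift _ hqa a c
  obtain ⟨hQ, hQs⟩ := hshift _ hqb b c
  exact sub_pos_and_sub_le_of_switch hf hL (hq.mono fun u hu => ha.trans hu.1) hr hQ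
    (fun u hu => hqs (ha.trans hu.1)) hrs hQs hgf hκ hC (by simp [hp₀ _ hqa])
    (by simp [hp₀ _ hqb]) hab hbc

def chemostatField (D sIn k : ℝ) (μ : ℝ → ℝ) (ℓ : ℕ) (x : ℝ) : ℝ :=
  D * (sIn - x) - k * μ x * ℓ

section chemostatField

variable {D sIn k : ℝ} {μ : ℝ → ℝ}

theorem chemostatField_antitoneOn (hD : 0 ≤ D) (hk : 0 ≤ k) (hμ : MonotoneOn μ (Ici 0)) (ℓ : ℕ) :
    AntitoneOn (chemostatField D sIn k μ ℓ) (Ici 0) := fun x hx y hy hxy => by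
  have := mul_le_mul_of_nonneg_right (mul_le_mul_of_nonneg_left (hμ hx hy hxy) hk) ℓ.cast_nonneg
  unfold chemostatField
  nlinarith

theorem chemostatField_contDiffOn (hμ : ContDiffOn ℝ 1 μ (Ici 0)) (ℓ : ℕ) :
    ContDiffOn ℝ 1 (chemostatField D sIn k μ ℓ) (Ici 0) := by
  unfold chemostatField
  fun_prop

theorem chemostatField_two_add (x : ℝ) :
    chemostatField D sIn k μ 2 x + k * μ x = chemostatField D sIn k μ 1 x := by
  simp only [chemostatField]; push_cast; ring

theorem chemostatField_one_sub_two_le (hD : 0 ≤ D) (hk : 0 ≤ k) (hμ : MonotoneOn μ (Ici 0))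
    {u v M : ℝ} (hu : 0 ≤ u) (huM : u ≤ M) (hM : M ≤ sIn) (hv : 0 ≤ v) (hμv : 0 ≤ μ v) :
    chemostatField D sIn k μ 1 v - chemostatField D sIn k μ 2 u ≤ D * sIn + 2 * k * μ M := by
  have := mul_le_mul_of_nonneg_left (hμ hu (hu.trans huM) huM) hk
  simp only [chemostatField]; push_cast
  nlinarith [mul_nonneg hk hμv, mul_le_mul_of_nonneg_left (show u - v ≤ sIn by linarith) hD]

end chemostatField

theorem chemostat_switch {D sIn k m M a b c : ℝ} {μ q : ℝ → ℝ} {p : ℝ → ℝ → ℝ}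
    (hD : 0 ≤ D) (hk : 0 < k) (hμC1 : ContDiffOn ℝ 1 μ (Ici 0)) (hμ : MonotoneOn μ (Ici 0))
    (hm : 0 < m) (hμm : 0 < μ m) (hM : M ≤ sIn)
    (hq : SolvesOn (chemostatField D sIn k μ 2) q (Ici 0))
    (hp : ∀ x ∈ Icc m M, SolvesOn (chemostatField D sIn k μ 1) (p x) (Ici 0))
    (hp₀ : ∀ x ∈ Icc m M, p x 0 = x) (hqI : MapsTo q (Ici 0) (Icc m M))
    (hpI : ∀ x ∈ Icc m M, MapsTo (p x) (Ici 0) (Icc m M))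
    (ha : 0 ≤ a) (hab : a < b) (hbc : b ≤ c) :
    0 < p (q a) (c - a) - p (q b) (c - b) ∧
      p (q a) (c - a) - p (q b) (c - b) ≤ (D * sIn + 2 * k * μ M) * (b - a) := by
  have hI : Icc m M ⊆ Ici 0 := fun x hx => hm.le.trans hx.1
  obtain ⟨L, hL⟩ := ((chemostatField_contDiffOn hμC1 1).mono hI).exists_lipschitzOnWith
    one_ne_zero (convex_Icc m M) isCompact_Icc
  refine sub_pos_and_sub_le_of_switch_flow ((chemostatField_antitoneOn hD hk.le hμ 1).mono hI)
    hL hq hp hp₀ hqI hpI (κ := k * μ m) (fun x hx => ?_) (mul_pos hk hμm)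
    (fun u hu v hv => chemostatField_one_sub_two_le hD hk.le hμ (hI hu) hu.2 hM (hI hv)
      (hμm.le.trans (hμ hm.le (hI hv) hv.1))) ha hab hbc
  rw [← chemostatField_two_add x]
  have := mul_le_mul_of_nonneg_left (hμ hm.le (hI hx) hx.1) hk.le
  linarith

theorem stmt_15_general
    (D sIn k : ℝ) (μ : ℝ → ℝ)
    (hD : 0 < D) (hk : 0 < k)
    (hμC1 : ContDiffOn ℝ 1 μ (Set.Ici 0))
    (hμmono : StrictMonoOn μ (Set.Ici 0))
    (hμpos : ∀ s : ℝ, 0 < s → 0 < μ s)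
    (sbar : ℕ → ℝ)
    (hsbar_mem : ∀ ℓ : ℕ, 1 ≤ ℓ → sbar ℓ ∈ Set.Ioo 0 sIn)
    (hsbar_eq : ∀ ℓ : ℕ, 1 ≤ ℓ → D * (sIn - sbar ℓ) - k * μ (sbar ℓ) * (ℓ : ℝ) = 0)
    (phi : ℕ → ℝ → ℝ → ℝ)
    (hphi_init : ∀ ℓ : ℕ, 1 ≤ ℓ → ∀ s₀ : ℝ, 0 ≤ s₀ → phi ℓ s₀ 0 = s₀)
    (hphi_deriv : ∀ ℓ : ℕ, 1 ≤ ℓ → ∀ s₀ : ℝ, 0 ≤ s₀ → ∀ t : ℝ, 0 ≤ t →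
      HasDerivWithinAt (phi ℓ s₀)
        (D * (sIn - phi ℓ s₀ t) - k * μ (phi ℓ s₀ t) * (ℓ : ℝ)) (Set.Ici 0) t) :
    ∀ t : ℝ, 0 < t → ∀ s : ℝ, 0 < s → s ≤ sbar 1 →
      StrictAntiOn (fun v => phi 1 (phi 2 s v) (t - v)) (Set.Icc 0 t) ∧
      ∀ v₁ v₂ : ℝ, 0 ≤ v₁ → v₁ ≤ v₂ → v₂ ≤ t →
        phi 1 (phi 2 s v₁) (t - v₁) - phi 1 (phi 2 s v₂) (t - v₂)
          ≤ (D * sIn + 2 * k * μ (sbar 1)) * (v₂ - v₁) := by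
  intro t _ s hs hsb
  obtain ⟨hb₁, hb₁_lt⟩ := hsbar_mem 1 le_rfl
  obtain ⟨hb₂, -⟩ := hsbar_mem 2 one_le_two
  set F := chemostatField D sIn k μ
  set m := min s (sbar 2)
  have hm : 0 < m := lt_min hs hb₂
  have hF : ∀ ℓ, AntitoneOn (F ℓ) (Ioi 0) := fun ℓ =>
    (chemostatField_antitoneOn hD.le hk.le hμmono.monotoneOn ℓ).mono Ioi_subset_Ici_self
  have hF₂₁ : ∀ x, F 2 x + k * μ x = F 1 x := chemostatField_two_add
  have hF₂m : 0 ≤ F 2 m := (hsbar_eq 2 one_le_two).symm.trans_le (hF 2 hm hb₂ (min_le_right _ _))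
  have hF₁b : F 1 (sbar 1) = 0 := hsbar_eq 1 le_rfl
  have hsol : ∀ ℓ, 1 ≤ ℓ → ∀ x, 0 ≤ x → SolvesOn (F ℓ) (phi ℓ x) (Ici 0) := hphi_deriv
  -- both fields are `≥ 0` at `m` and `≤ 0` at `s̄₁`, so `[m, s̄₁]` is invariant
  have hq : MapsTo (phi 2 s) (Ici 0) (Icc m (sbar 1)) :=
    (hsol 2 one_le_two s hs.le).mapsTo_Icc (hF 2) hm hF₂m
      (by linarith [hF₂₁ (sbar 1), mul_pos hk (hμpos _ hb₁)])
      (by rw [hphi_init 2 one_le_two s hs.le]; exact ⟨min_le_left _ _, hsb⟩)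
  have hp : ∀ x ∈ Icc m (sbar 1), MapsTo (phi 1 x) (Ici 0) (Icc m (sbar 1)) := fun x hx =>
    (hsol 1 le_rfl x (hm.le.trans hx.1)).mapsTo_Icc (hF 1) hm
      (by linarith [hF₂₁ m, mul_pos hk (hμpos _ hm)]) hF₁b.le
      (by rwa [hphi_init 1 le_rfl x (hm.le.trans hx.1)])
  have hswitch := fun v₁ v₂ (h₀ : 0 ≤ v₁) (h₁₂ : v₁ < v₂) (h₂t : v₂ ≤ t) =>
    chemostat_switch hD.le hk hμC1 hμmono.monotoneOn hm (hμpos _ hm) hb₁_lt.le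
      (hsol 2 one_le_two s hs.le) (fun x hx => hsol 1 le_rfl x (hm.le.trans hx.1))
      (fun x hx => hphi_init 1 le_rfl x (hm.le.trans hx.1)) hq hp h₀ h₁₂ h₂t
  refine ⟨fun v₁ hv₁ v₂ hv₂ h => sub_pos.1 (hswitch v₁ v₂ hv₁.1 h hv₂.2).1,
    fun v₁ v₂ h₀ h₁₂ h₂t => ?_⟩
  rcases h₁₂.eq_or_lt with rfl | h
  · simp
  · exact (hswitch v₁ v₂ h₀ h h₂t).2

/-- For 0 < s ≤ s̄₁ and t > 0, the map h(v) = φ(1, φ(2, s, v), t − v) is strictly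
decreasing on [0, t], and h(v₁) − h(v₂) ≤ (D s_in + 2 k μ(s̄₁)) (v₂ − v₁) for
0 ≤ v₁ ≤ v₂ ≤ t. -/
theorem stmt_15
    (D sIn k : ℝ) (μ : ℝ → ℝ)
    (hD : 0 < D) (hsIn : 0 < sIn) (hk : 0 < k)
    (hμC1 : ContDiffOn ℝ 1 μ (Set.Ici 0))
    (hμmono : StrictMonoOn μ (Set.Ici 0))
    (hμ0 : μ 0 = 0)
    (hμpos : ∀ s : ℝ, 0 < s → 0 < μ s)
    (sbar : ℕ → ℝ)
    (hsbar_mem : ∀ ℓ : ℕ, 1 ≤ ℓ → sbar ℓ ∈ Set.Ioo 0 sIn)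
    (hsbar_eq : ∀ ℓ : ℕ, 1 ≤ ℓ → D * (sIn - sbar ℓ) - k * μ (sbar ℓ) * (ℓ : ℝ) = 0)
    (phi : ℕ → ℝ → ℝ → ℝ)
    (hphi_init : ∀ ℓ : ℕ, 1 ≤ ℓ → ∀ s₀ : ℝ, 0 ≤ s₀ → phi ℓ s₀ 0 = s₀)
    (hphi_deriv : ∀ ℓ : ℕ, 1 ≤ ℓ → ∀ s₀ : ℝ, 0 ≤ s₀ → ∀ t : ℝ, 0 ≤ t →
      HasDerivWithinAt (phi ℓ s₀)
        (D * (sIn - phi ℓ s₀ t) - k * μ (phi ℓ s₀ t) * (ℓ : ℝ)) (Set.Ici 0) t) :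
    ∀ t : ℝ, 0 < t → ∀ s : ℝ, 0 < s → s ≤ sbar 1 →
      StrictAntiOn (fun v => phi 1 (phi 2 s v) (t - v)) (Set.Icc 0 t) ∧
      ∀ v₁ v₂ : ℝ, 0 ≤ v₁ → v₁ ≤ v₂ → v₂ ≤ t →
        phi 1 (phi 2 s v₁) (t - v₁) - phi 1 (phi 2 s v₂) (t - v₂)
          ≤ (D * sIn + 2 * k * μ (sbar 1)) * (v₂ - v₁) :=
  stmt_15_general D sIn k μ hD hk hμC1 hμmono hμpos sbar hsbar_mem hsbar_eq phi hphi_init hphi_deriv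
end

section
/- Assume μ(s̄₁) > D. Fix ρ > 1, α ≥ (ρ − 1)/k, p with 0 < p < (μ(s̄₁) − D)/(D + k·μ'(s̄₁)), and θ > (p(D + k·μ'(s̄₁)) + D)/(μ(s̄₁) − p(D + k·μ'(s̄₁)) − D). Define Ṽ on ℕ × (0, s_in) by Ṽ(x, s) = ρ^x e^{αs}/log ρ + 1/s + (1 + θ·𝟙_{x=1})/(s̄₁ − s)^p when x ≥ 1 and 0 < s < s̄₁, and Ṽ(x, s) = 0 when x = 0 or s ≥ s̄₁. Then there exist η > D and ζ > 0 such that for all integers x ≥ 1 and all s ∈ (0, s̄₁): [D(s_in − s) − k μ(s) x]·∂_s Ṽ(x, s) + μ(s)·x·(Ṽ(x+1, s) − Ṽ(x, s)) + D·x·(Ṽ(x−1, s) − Ṽ(x, s)) ≤ −η·Ṽ(x, s) + ζ·x. -/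
/-!
Write Ṽ = E + R + P with E = ρ^x e^{αs} / log ρ, R = 1/s and P = c_x (s̄₁ - s)^{-p}, where
c_x = 1 + θ 𝟙_{x=1}; the generator is linear, so the three drifts can be bounded separately.

Because kα ≥ ρ - 1, the drift of E is at most (D s_in α - D (1 - 1/ρ) x) E, which is very
negative for large x. The drift of R is -(D (s_in - s) - k μ(s) x) / s²; as μ(s) ≤ L s, the bad
part is at most k L x / s, and AM-GM against D (s_in - s̄₁) / s² leaves a term of order x²,
swallowed by the E-term since ρ^x outgrows x.

The P-term only matters near s̄₁. For x = 1 the substrate drift D (s_in - s) - k μ(s) vanishes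
at s̄₁ with slope -(D + k μ'(s̄₁)), so the bracket multiplying (s̄₁ - s)^{-p} tends to
(1 + θ)(p (D + k μ'(s̄₁)) + η) - θ (μ(s̄₁) + D), which the conditions on p and θ make negative
for some η > D. For x ≥ 2 the drift tends to k μ(s̄₁)(1 - x) < 0 and the bracket tends to -∞.
-/

open Filter Topology Set

lemma neg_mul_sq_add_mul_le {a : ℝ} (ha : 0 < a) (b u : ℝ) :
    -(a * u ^ 2) + b * u ≤ b ^ 2 / (4 * a) := by
  rw [le_div_iff₀ (by positivity)]
  nlinarith [sq_nonneg (2 * a * u - b)]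

lemma exists_mul_sub_mul_pow_le {ρ c : ℝ} (hρ : 1 < ρ) (hc : 0 < c) (K : ℝ) :
    ∃ B, ∀ x : ℕ, K * x - c * ρ ^ x ≤ B := by
  have hlog := Real.log_pos hρ
  refine ⟨(K / Real.log ρ) ^ 2 / (4 * (c / 2)), fun x => ?_⟩
  have ht : 0 ≤ x * Real.log ρ := by positivity
  have hexp : (x * Real.log ρ) ^ 2 / 2 ≤ ρ ^ x := by
    have := Real.quadratic_le_exp_of_nonneg ht
    rw [Real.exp_nat_mul, Real.exp_log (by linarith)] at this
    nlinarith
  calc K * x - c * ρ ^ x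
      ≤ -(c / 2 * (x * Real.log ρ) ^ 2) + K / Real.log ρ * (x * Real.log ρ) := by
        field_simp
        nlinarith
    _ ≤ _ := neg_mul_sq_add_mul_le (by positivity) _ _

lemma exists_sub_mul_mul_le {ρ a b C₀ : ℝ} (hρ : 1 ≤ ρ) (hb : 0 < b) (hC₀ : 0 ≤ C₀) :
    ∃ B, ∀ x : ℕ, ∀ e, 0 ≤ e → e ≤ C₀ * ρ ^ x → (a - b * x) * e ≤ B := by
  refine ⟨|a| * (C₀ * ρ ^ ⌈a / b⌉₊), fun x e he heC => ?_⟩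
  rcases le_or_gt (a - b * x) 0 with hneg | hpos
  · exact (mul_nonpos_of_nonpos_of_nonneg hneg he).trans (by positivity)
  have hxN : x ≤ ⌈a / b⌉₊ := by
    have : (x : ℝ) ≤ a / b := by rw [le_div_iff₀ hb]; linarith
    exact_mod_cast this.trans (Nat.le_ceil _)
  calc (a - b * x) * e ≤ |a| * e := by
        gcongr
        linarith [le_abs_self a, mul_nonneg hb.le (Nat.cast_nonneg (α := ℝ) x)]
    _ ≤ |a| * (C₀ * ρ ^ ⌈a / b⌉₊) := by
        gcongr
        exact heC.trans (by gcongr)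

lemma exists_sub_mul_mul_add_mul_sq_le {ρ a b K c₀ C₀ : ℝ} (hρ : 1 < ρ) (hb : 0 < b)
    (hc₀ : 0 < c₀) (hC₀ : 0 ≤ C₀) :
    ∃ B, ∀ x : ℕ, 1 ≤ x → ∀ e, c₀ * ρ ^ x ≤ e → e ≤ C₀ * ρ ^ x →
      (a - b * x) * e + K * x ^ 2 ≤ B * x := by
  obtain ⟨B₁, hB₁⟩ := exists_sub_mul_mul_le (a := a) hρ.le (half_pos hb) hC₀
  obtain ⟨B₂, hB₂⟩ := exists_mul_sub_mul_pow_le hρ (by positivity : 0 < b / 2 * c₀) K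
  refine ⟨max B₁ 0 + B₂, fun x hx e he₀ he₁ => ?_⟩
  have hx' : (1 : ℝ) ≤ x := by exact_mod_cast hx
  have he : 0 ≤ e := (by positivity : 0 ≤ c₀ * ρ ^ x).trans he₀
  have h₁ := hB₁ x e he he₁
  have h₂ : x * (K * x - b / 2 * e) ≤ x * B₂ := by
    gcongr
    calc K * x - b / 2 * e ≤ K * x - b / 2 * c₀ * ρ ^ x := by nlinarith
      _ ≤ B₂ := hB₂ x
  have h₃ : max B₁ 0 ≤ max B₁ 0 * x := le_mul_of_one_le_right (le_max_right _ _) hx'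
  nlinarith [le_max_left B₁ 0]

lemma exists_div_rpow_le {G : ℝ → ℝ} {a σ p M₀ M₁ : ℝ} (hp : 0 ≤ p) (hM₀ : 0 ≤ M₀)
    (hM₁ : 0 ≤ M₁) (hev : ∀ᶠ s in 𝓝[<] σ, G s ≤ 0)
    (hbd : ∀ s ∈ Ioo a σ, G s ≤ M₀ / (σ - s) + M₁) :
    ∃ C, ∀ s ∈ Ioo a σ, G s / (σ - s) ^ p ≤ C := by
  obtain ⟨l, hlσ, hl⟩ := mem_nhdsLT_iff_exists_Ioo_subset.1 hev
  have hδ : 0 < σ - l := sub_pos.2 hlσ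
  refine ⟨(M₀ / (σ - l) + M₁) / (σ - l) ^ p, fun s hs => ?_⟩
  have hsσ : 0 < σ - s := sub_pos.2 hs.2
  rcases le_or_gt s l with hsl | hls
  · calc G s / (σ - s) ^ p ≤ (M₀ / (σ - s) + M₁) / (σ - s) ^ p := by
          gcongr
          exact hbd s hs
      _ ≤ (M₀ / (σ - l) + M₁) / (σ - l) ^ p := by
          gcongr
  · exact (div_nonpos_of_nonpos_of_nonneg (hl ⟨hls, hs.2⟩) (by positivity)).trans
      (by positivity)

lemma exists_le_mul_of_contDiffOn_Icc {f : ℝ → ℝ} {σ : ℝ} (hf : ContDiffOn ℝ 1 f (Icc 0 σ))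
    (hf₀ : f 0 = 0) : ∃ L, 0 ≤ L ∧ ∀ s ∈ Icc 0 σ, f s ≤ L * s := by
  obtain ⟨K, hK⟩ := hf.exists_lipschitzOnWith one_ne_zero (convex_Icc 0 σ) isCompact_Icc
  refine ⟨K, K.2, fun s hs => ?_⟩
  have := hK.dist_le_mul s hs 0 ⟨le_rfl, hs.1.trans hs.2⟩
  rw [Real.dist_eq, Real.dist_eq, hf₀, sub_zero, sub_zero, abs_of_nonneg hs.1] at this
  exact (le_abs_self _).trans this

namespace CrumpYoung

noncomputable def generator (D sIn k : ℝ) (μ : ℝ → ℝ) (f : ℕ → ℝ → ℝ) (x : ℕ) (s : ℝ) : ℝ :=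
  (D * (sIn - s) - k * μ s * x) * deriv (f x) s + μ s * x * (f (x + 1) s - f x s)
    + D * x * (f (x - 1) s - f x s)

noncomputable def expPart (ρ α : ℝ) (x : ℕ) : ℝ → ℝ :=
  fun s => ρ ^ x * Real.exp (α * s) / Real.log ρ

noncomputable def invPart (_ : ℕ) : ℝ → ℝ := fun s => 1 / s

noncomputable def powCoeff (θ : ℝ) (x : ℕ) : ℝ := 1 + if x = 1 then θ else 0

noncomputable def powPart (σ p θ : ℝ) (x : ℕ) : ℝ → ℝ := fun s => powCoeff θ x / (σ - s) ^ p

/-- The formula for Ṽ, taken on all of `ℕ`: at `x = 0` it is positive while Ṽ vanishes, so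
replacing Ṽ by it can only increase the generator. -/
noncomputable def lyapunov (σ ρ α p θ : ℝ) : ℕ → ℝ → ℝ := expPart ρ α + invPart + powPart σ p θ

variable {D sIn k : ℝ} {μ : ℝ → ℝ} {x : ℕ} {s : ℝ}

lemma generator_add {f g : ℕ → ℝ → ℝ} (hf : DifferentiableAt ℝ (f x) s)
    (hg : DifferentiableAt ℝ (g x) s) :
    generator D sIn k μ (f + g) x s = generator D sIn k μ f x s + generator D sIn k μ g x s := by
  simp only [generator, Pi.add_apply, deriv_add hf hg]
  ring

lemma generator_le_of_eventuallyEq {f g : ℕ → ℝ → ℝ} (hD : 0 ≤ D) (hx : f x =ᶠ[𝓝 s] g x)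
    (hsucc : f (x + 1) s = g (x + 1) s) (hpred : f (x - 1) s ≤ g (x - 1) s) :
    generator D sIn k μ f x s ≤ generator D sIn k μ g x s := by
  simp only [generator, hx.deriv_eq, hsucc, hx.eq_of_nhds]
  gcongr

lemma hasDerivAt_expPart (ρ α : ℝ) (x : ℕ) (s : ℝ) :
    HasDerivAt (expPart ρ α x) (α * expPart ρ α x s) s := by
  have := (((hasDerivAt_id' s).const_mul α).exp.const_mul (ρ ^ x)).div_const (Real.log ρ)
  exact this.congr_deriv (by simp only [expPart]; ring)

lemma generator_expPart_le {ρ α : ℝ} (hD : 0 ≤ D) (hρ : 1 < ρ) (hα : 0 ≤ α)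
    (hkα : ρ - 1 ≤ k * α) (hx : 1 ≤ x) (hs : 0 ≤ s) (hμs : 0 ≤ μ s) :
    generator D sIn k μ (expPart ρ α) x s
      ≤ (D * sIn * α - D * (1 - ρ⁻¹) * x) * expPart ρ α x s := by
  have hsucc : expPart ρ α (x + 1) s = ρ * expPart ρ α x s := by
    simp only [expPart, pow_succ]; ring
  have hpred : expPart ρ α (x - 1) s = ρ⁻¹ * expPart ρ α x s := by
    obtain ⟨n, rfl⟩ := Nat.exists_eq_add_of_le' hx
    simp only [expPart, Nat.add_sub_cancel, pow_succ]
    field_simp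
  have hE : 0 ≤ expPart ρ α x s := by
    have := Real.log_pos hρ
    unfold expPart; positivity
  have hdrift : (D * (sIn - s) - k * μ s * x) * α + μ s * x * (ρ - 1) ≤ D * sIn * α := by
    nlinarith [mul_nonneg (mul_nonneg hμs (Nat.cast_nonneg (α := ℝ) x)) (sub_nonneg.2 hkα),
      mul_nonneg (mul_nonneg hD hs) hα]
  rw [generator, (hasDerivAt_expPart ρ α x s).deriv, hsucc, hpred]
  nlinarith [mul_le_mul_of_nonneg_right hdrift hE]

lemma generator_invPart :
    generator D sIn k μ invPart x s = -(D * (sIn - s) - k * μ s * x) / s ^ 2 := by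
  unfold generator invPart
  simp only [one_div, deriv_inv, sub_self, mul_zero, add_zero]
  ring

lemma generator_invPart_add_le {σ L η : ℝ} (hD : 0 ≤ D) (hk : 0 ≤ k) (hA : 0 < D * (sIn - σ))
    (hL : 0 ≤ L) (hη : 0 ≤ η) (hx : 1 ≤ x) (hs : 0 < s) (hsσ : s < σ) (hμs : μ s ≤ L * s) :
    generator D sIn k μ invPart x s + η * invPart x s
      ≤ (k * L + η) ^ 2 / (4 * (D * (sIn - σ))) * x ^ 2 := by
  have hx' : (1 : ℝ) ≤ x := by exact_mod_cast hx
  have h₁ : generator D sIn k μ invPart x s + η * invPart x s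
      ≤ -(D * (sIn - σ) * s⁻¹ ^ 2) + (k * L * x + η) * s⁻¹ := by
    rw [generator_invPart, invPart]
    have hkμ : k * μ s * x ≤ k * L * x * s := by
      have := mul_le_mul_of_nonneg_left hμs hk
      nlinarith [mul_le_mul_of_nonneg_right this (by positivity : (0 : ℝ) ≤ x)]
    have hσs : D * (sIn - σ) ≤ D * (sIn - s) := by nlinarith
    field_simp
    nlinarith
  calc _ ≤ _ := h₁
    _ ≤ (k * L * x + η) ^ 2 / (4 * (D * (sIn - σ))) := neg_mul_sq_add_mul_le hA _ _
    _ ≤ (k * L + η) ^ 2 / (4 * (D * (sIn - σ))) * x ^ 2 := by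
        rw [div_mul_eq_mul_div, ← mul_pow]
        gcongr
        nlinarith

section powPart

variable {σ p θ η : ℝ}

lemma powCoeff_one : powCoeff θ 1 = 1 + θ := by simp [powCoeff]

lemma powCoeff_of_ne_one (hx : x ≠ 1) : powCoeff θ x = 1 := by simp [powCoeff, hx]

lemma hasDerivAt_powPart (x : ℕ) (hs : s < σ) :
    HasDerivAt (powPart σ p θ x) (p * powPart σ p θ x s / (σ - s)) s := by
  have hσs : 0 < σ - s := sub_pos.2 hs
  have h := (((hasDerivAt_id' s).const_sub σ).rpow_const (p := p) (Or.inl hσs.ne')).inv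
    (Real.rpow_pos_of_pos hσs p).ne'
  have hfun : powPart σ p θ x = fun t => powCoeff θ x * ((σ - t) ^ p)⁻¹ :=
    funext fun _ => div_eq_mul_inv _ _
  rw [hfun]
  refine (h.const_mul (powCoeff θ x)).congr_deriv ?_
  rw [Real.rpow_sub_one hσs.ne']
  field_simp

noncomputable def powBracket (D sIn k : ℝ) (μ : ℝ → ℝ) (σ p θ η : ℝ) (x : ℕ) (s : ℝ) : ℝ :=
  (D * (sIn - s) - k * μ s * x) / (σ - s) * (p * powCoeff θ x)
    + μ s * x * (powCoeff θ (x + 1) - powCoeff θ x)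
    + D * x * (powCoeff θ (x - 1) - powCoeff θ x) + η * powCoeff θ x

lemma generator_powPart_add_eq (hs : s < σ) :
    generator D sIn k μ (powPart σ p θ) x s + η * powPart σ p θ x s
      = powBracket D sIn k μ σ p θ η x s / (σ - s) ^ p := by
  rw [generator, (hasDerivAt_powPart x hs).deriv]
  simp only [powPart, powBracket]
  ring

lemma powBracket_one : powBracket D sIn k μ σ p θ η 1 s
    = (D * (sIn - s) - k * μ s) / (σ - s) * (p * (1 + θ)) - μ s * θ - D * θ + η * (1 + θ) := by
  rw [powBracket, powCoeff_one, powCoeff_of_ne_one (x := 1 + 1) (by norm_num),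
    powCoeff_of_ne_one (x := 1 - 1) (by norm_num), Nat.cast_one]
  ring

lemma powBracket_two : powBracket D sIn k μ σ p θ η 2 s
    = (D * (sIn - s) - k * μ s * 2) / (σ - s) * p + 2 * D * θ + η := by
  rw [powBracket, powCoeff_of_ne_one (x := 2) (by norm_num),
    powCoeff_of_ne_one (x := 2 + 1) (by norm_num), show 2 - 1 = 1 from rfl, powCoeff_one,
    Nat.cast_ofNat]
  ring

lemma powBracket_of_three_le (hx : 3 ≤ x) : powBracket D sIn k μ σ p θ η x s
    = (D * (sIn - s) - k * μ s * x) / (σ - s) * p + η := by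
  rw [powBracket, powCoeff_of_ne_one (x := x) (by omega),
    powCoeff_of_ne_one (x := x + 1) (by omega), powCoeff_of_ne_one (x := x - 1) (by omega)]
  ring

lemma powBracket_le_max (hD : 0 ≤ D) (hk : 0 ≤ k) (hp : 0 ≤ p) (hθ : 0 ≤ θ) (hx : 1 ≤ x)
    (hsσ : s < σ) (hμs : 0 ≤ μ s) :
    powBracket D sIn k μ σ p θ η x s
      ≤ max (powBracket D sIn k μ σ p θ η 1 s) (powBracket D sIn k μ σ p θ η 2 s) := by
  rcases hx.eq_or_lt with rfl | hx
  · exact le_max_left _ _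
  refine le_max_of_le_right ?_
  rcases (Nat.succ_le_of_lt hx).eq_or_lt with rfl | hx
  · exact le_rfl
  have hx₂ : (2 : ℝ) ≤ x := by exact_mod_cast hx.le
  have hdrift : (D * (sIn - s) - k * μ s * x) / (σ - s)
      ≤ (D * (sIn - s) - k * μ s * 2) / (σ - s) := by
    gcongr
  rw [powBracket_of_three_le hx, powBracket_two]
  linarith [mul_le_mul_of_nonneg_right hdrift hp, mul_nonneg hD hθ]

lemma tendsto_powBracket_one {μ' : ℝ} (hμ : HasDerivAt μ μ' σ)
    (heq : D * (sIn - σ) = k * μ σ) :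
    Tendsto (powBracket D sIn k μ σ p θ η 1) (𝓝[<] σ)
      (𝓝 ((1 + θ) * (p * (D + k * μ') + η) - θ * (μ σ + D))) := by
  have hF : HasDerivAt (fun t => D * (sIn - t) - k * μ t) (-(D + k * μ')) σ := by
    have := (((hasDerivAt_id' σ).const_sub sIn).const_mul D).sub (hμ.const_mul k)
    exact this.congr_deriv (by ring)
  have hslope : Tendsto (fun t => (D * (sIn - t) - k * μ t) / (σ - t)) (𝓝[<] σ)
      (𝓝 (D + k * μ')) := by
    have := ((hasDerivAt_iff_tendsto_slope.1 hF).mono_left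
      (nhdsWithin_mono σ fun t (ht : t < σ) => ht.ne)).neg
    rw [neg_neg] at this
    refine this.congr' ?_
    filter_upwards [self_mem_nhdsWithin] with t (ht : t < σ)
    rw [slope_def_field, heq, sub_self, sub_zero, ← neg_sub σ t, div_neg, neg_neg]
  have hμc : Tendsto μ (𝓝[<] σ) (𝓝 (μ σ)) :=
    hμ.continuousAt.tendsto.mono_left nhdsWithin_le_nhds
  rw [show (1 + θ) * (p * (D + k * μ') + η) - θ * (μ σ + D)
      = (D + k * μ') * (p * (1 + θ)) - μ σ * θ - D * θ + η * (1 + θ) by ring]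
  refine Tendsto.congr (fun t => powBracket_one.symm) ?_
  exact (((hslope.mul_const _).sub (hμc.mul_const θ)).sub_const _).add_const _

lemma tendsto_powBracket_two_atBot (hp : 0 < p) (hk : 0 < k) (hμσ : 0 < μ σ)
    (hμ : ContinuousAt μ σ) (heq : D * (sIn - σ) = k * μ σ) :
    Tendsto (powBracket D sIn k μ σ p θ η 2) (𝓝[<] σ) atBot := by
  have hF : Tendsto (fun t => D * (sIn - t) - k * μ t * 2) (𝓝[<] σ) (𝓝 (-(k * μ σ))) := by
    have := (((tendsto_const_nhds (x := sIn)).sub tendsto_id).const_mul D).sub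
      ((hμ.tendsto.const_mul k).mul_const 2)
    rw [show -(k * μ σ) = D * (sIn - σ) - k * μ σ * 2 by rw [heq]; ring]
    exact this.mono_left nhdsWithin_le_nhds
  have hσt : Tendsto (fun t => σ - t) (𝓝[<] σ) (𝓝[>] 0) := by
    refine tendsto_nhdsWithin_iff.2 ⟨?_, ?_⟩
    · have := ((tendsto_const_nhds (x := σ)).sub tendsto_id).mono_left
        (nhdsWithin_le_nhds (a := σ) (s := Iio σ))
      rwa [sub_self] at this
    · filter_upwards [self_mem_nhdsWithin] with t (ht : t < σ) using sub_pos.2 ht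
  have := tendsto_atBot_add_const_right _ (2 * D * θ + η)
    ((hF.neg_mul_atTop (by nlinarith) (tendsto_inv_nhdsGT_zero.comp hσt)).atBot_mul_const hp)
  refine this.congr fun t => ?_
  rw [powBracket_two, Function.comp_apply, div_eq_mul_inv]
  ring

lemma exists_generator_powPart_add_le {μ' : ℝ} (hD : 0 < D) (hk : 0 < k) (hp : 0 < p)
    (hθ : 0 ≤ θ) (hη : 0 ≤ η) (hσ : 0 < σ) (hσIn : σ < sIn) (hμpos : ∀ s, 0 < s → 0 < μ s)
    (hμ : HasDerivAt μ μ' σ) (heq : D * (sIn - σ) = k * μ σ)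
    (hrate : (1 + θ) * (p * (D + k * μ') + η) < θ * (μ σ + D)) :
    ∃ C, ∀ x : ℕ, 1 ≤ x → ∀ s ∈ Ioo 0 σ,
      generator D sIn k μ (powPart σ p θ) x s + η * powPart σ p θ x s ≤ C := by
  set G := fun s => max (powBracket D sIn k μ σ p θ η 1 s) (powBracket D sIn k μ σ p θ η 2 s)
  have hev : ∀ᶠ s in 𝓝[<] σ, G s ≤ 0 := by
    filter_upwards [(tendsto_powBracket_one hμ heq).eventually_lt_const (sub_neg.2 hrate),
      (tendsto_powBracket_two_atBot hp hk (hμpos σ hσ) hμ.continuousAt heq).eventually_le_atBot 0]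
      with s h₁ h₂
    exact max_le h₁.le h₂
  have hsIn : 0 < sIn := hσ.trans hσIn
  have hbd : ∀ s ∈ Ioo 0 σ,
      G s ≤ D * sIn * (p * (1 + θ)) / (σ - s) + (2 * D * θ + η * (1 + θ)) := by
    rintro s ⟨hs, hsσ⟩
    have hμs := (hμpos s hs).le
    have hσs := sub_pos.2 hsσ
    have h₁ : (D * (sIn - s) - k * μ s) / (σ - s) * (p * (1 + θ))
        ≤ D * sIn * (p * (1 + θ)) / (σ - s) := by
      rw [div_mul_eq_mul_div]
      gcongr
      nlinarith [mul_nonneg hk.le hμs]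
    have h₂ : (D * (sIn - s) - k * μ s * 2) / (σ - s) * p
        ≤ D * sIn * (p * (1 + θ)) / (σ - s) := by
      rw [div_mul_eq_mul_div]
      refine div_le_div_of_nonneg_right ?_ hσs.le
      nlinarith [mul_nonneg hk.le hμs, mul_nonneg (mul_nonneg hD.le hs.le) hp.le,
        mul_nonneg (mul_nonneg hD.le hsIn.le) (mul_nonneg hp.le hθ)]
    refine max_le ?_ ?_
    · rw [powBracket_one]
      linarith [mul_nonneg hμs hθ, mul_nonneg hD.le hθ]
    · rw [powBracket_two]
      linarith [mul_nonneg hη hθ]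
  obtain ⟨C, hC⟩ := exists_div_rpow_le hp.le (by positivity) (by positivity) hev hbd
  refine ⟨C, fun x hx s hs => ?_⟩
  rw [generator_powPart_add_eq hs.2]
  calc _ ≤ G s / (σ - s) ^ p := by
        gcongr
        · exact Real.rpow_nonneg (sub_pos.2 hs.2).le p
        · exact powBracket_le_max hD.le hk.le hp.le hθ hx hs.2 (hμpos s hs.1).le
    _ ≤ C := hC s hs

end powPart

lemma lyapunov_pos {σ ρ α p θ : ℝ} (hρ : 1 < ρ) (hθ : 0 ≤ θ) (x : ℕ) (hs : 0 < s)
    (hsσ : s < σ) : 0 < lyapunov σ ρ α p θ x s := by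
  have := Real.log_pos hρ
  have := sub_pos.2 hsσ
  simp only [lyapunov, Pi.add_apply, expPart, invPart, powPart, powCoeff]
  positivity

theorem exists_generator_lyapunov_add_le {σ ρ α p θ η μ' : ℝ} (hD : 0 < D) (hk : 0 < k)
    (hσ : 0 < σ) (hσIn : σ < sIn) (hρ : 1 < ρ) (hkα : ρ - 1 ≤ k * α) (hp : 0 < p)
    (hθ : 0 ≤ θ) (hη : 0 ≤ η) (hμC1 : ContDiffOn ℝ 1 μ (Icc 0 σ)) (hμ0 : μ 0 = 0)
    (hμpos : ∀ s, 0 < s → 0 < μ s) (hμ : HasDerivAt μ μ' σ) (heq : D * (sIn - σ) = k * μ σ)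
    (hrate : (1 + θ) * (p * (D + k * μ') + η) < θ * (μ σ + D)) :
    ∃ ζ, ∀ x : ℕ, 1 ≤ x → ∀ s ∈ Ioo 0 σ,
      generator D sIn k μ (lyapunov σ ρ α p θ) x s + η * lyapunov σ ρ α p θ x s ≤ ζ * x := by
  have hα : 0 ≤ α := by nlinarith
  have hlog := Real.log_pos hρ
  have hA : 0 < D * (sIn - σ) := mul_pos hD (sub_pos.2 hσIn)
  obtain ⟨L, hL0, hL⟩ := exists_le_mul_of_contDiffOn_Icc hμC1 hμ0
  obtain ⟨C, hC⟩ := exists_generator_powPart_add_le hD hk hp hθ hη hσ hσIn hμpos hμ heq hrate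
  obtain ⟨B, hB⟩ := exists_sub_mul_mul_add_mul_sq_le (a := D * sIn * α + η)
    (K := (k * L + η) ^ 2 / (4 * (D * (sIn - σ)))) hρ
    (mul_pos hD (sub_pos.2 (inv_lt_one_of_one_lt₀ hρ))) (one_div_pos.2 hlog)
    (by positivity : 0 ≤ Real.exp (α * σ) / Real.log ρ)
  refine ⟨B + |C|, fun x hx s hs => ?_⟩
  have hx' : (1 : ℝ) ≤ x := by exact_mod_cast hx
  have hμs := hμpos s hs.1
  have hEge : 1 / Real.log ρ * ρ ^ x ≤ expPart ρ α x s := by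
    rw [expPart, one_div_mul_eq_div]
    gcongr
    exact le_mul_of_one_le_right (by positivity) (Real.one_le_exp (mul_nonneg hα hs.1.le))
  have hEle : expPart ρ α x s ≤ Real.exp (α * σ) / Real.log ρ * ρ ^ x := by
    rw [expPart, div_mul_eq_mul_div, mul_comm (Real.exp _)]
    gcongr
    exact hs.2.le
  have hE := generator_expPart_le (sIn := sIn) hD.le hρ hα hkα hx hs.1.le hμs.le
  have hR := generator_invPart_add_le hD.le hk.le hA hL0 hη hx hs.1 hs.2
    (hL s ⟨hs.1.le, hs.2.le⟩)
  have hP := hC x hx s hs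
  have hEB := hB x hx (expPart ρ α x s) hEge hEle
  have hCx : C ≤ |C| * x := (le_abs_self C).trans (le_mul_of_one_le_right (abs_nonneg C) hx')
  have hinv : DifferentiableAt ℝ (invPart x) s :=
    (differentiableAt_const 1).div differentiableAt_id hs.1.ne'
  have hexp := (hasDerivAt_expPart ρ α x s).differentiableAt
  rw [lyapunov, generator_add (hexp.add hinv) (hasDerivAt_powPart x hs.2).differentiableAt,
    generator_add hexp hinv]
  simp only [Pi.add_apply]
  linarith

/-- With `q = D + k μ'(s̄₁)`, this makes the limit in `tendsto_powBracket_one` negative. -/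
lemma exists_drift_rate {D m p q θ : ℝ} (hD : 0 < D) (hmD : D < m) (hp : 0 < p)
    (hpq : p < (m - D) / q) (hθ : (p * q + D) / (m - (p * q + D)) < θ) :
    0 < θ ∧ ∃ η, D < η ∧ (1 + θ) * (p * q + η) < θ * (m + D) := by
  have hq : 0 < q := by
    by_contra! hq
    exact (hp.trans hpq).not_ge (div_nonpos_of_nonneg_of_nonpos (by linarith) hq)
  have hgap : 0 < m - (p * q + D) := by
    have := (lt_div_iff₀ hq).1 hpq
    linarith
  have hθ' : p * q + D < θ * (m - (p * q + D)) := (div_lt_iff₀ hgap).1 hθ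
  have hθpos : 0 < θ := by nlinarith [mul_pos hp hq]
  have hslack : 0 < θ * (m + D) - (1 + θ) * (p * q + D) := by nlinarith
  refine ⟨hθpos, D + (θ * (m + D) - (1 + θ) * (p * q + D)) / (2 * (1 + θ)), ?_, ?_⟩
  · have : 0 < (θ * (m + D) - (1 + θ) * (p * q + D)) / (2 * (1 + θ)) := by positivity
    linarith
  · field_simp
    nlinarith

end CrumpYoung

open CrumpYoung

theorem stmt_16_general
    (D sIn k : ℝ) (μ : ℝ → ℝ)
    (hD : 0 < D) (hk : 0 < k)
    (hμC1 : ContDiffOn ℝ 1 μ (Set.Ici 0))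
    (hμ0 : μ 0 = 0)
    (hμpos : ∀ s : ℝ, 0 < s → 0 < μ s)
    (sbar : ℕ → ℝ)
    (hsbar_mem : ∀ ℓ : ℕ, 1 ≤ ℓ → sbar ℓ ∈ Set.Ioo 0 sIn)
    (hsbar_eq : ∀ ℓ : ℕ, 1 ≤ ℓ → D * (sIn - sbar ℓ) - k * μ (sbar ℓ) * (ℓ : ℝ) = 0)
    (hμD : D < μ (sbar 1))
    (ρ α p θ : ℝ)
    (hρ : 1 < ρ)
    (hα : (ρ - 1) / k ≤ α)
    (hp0 : 0 < p)
    (hp1 : p < (μ (sbar 1) - D) / (D + k * deriv μ (sbar 1)))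
    (hθ : (p * (D + k * deriv μ (sbar 1)) + D)
            / (μ (sbar 1) - (p * (D + k * deriv μ (sbar 1)) + D)) < θ)
    (Vt : ℕ → ℝ → ℝ)
    (hVt1 : ∀ x : ℕ, 1 ≤ x → ∀ s : ℝ, 0 < s → s < sbar 1 →
      Vt x s = ρ ^ x * Real.exp (α * s) / Real.log ρ + 1 / s
        + (1 + (if x = 1 then θ else 0)) / (sbar 1 - s) ^ p)
    (hVt0 : ∀ x : ℕ, ∀ s : ℝ, 0 < s → s < sIn → (x = 0 ∨ sbar 1 ≤ s) → Vt x s = 0) :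
    ∃ η ζ : ℝ, D < η ∧ 0 < ζ ∧
      ∀ x : ℕ, 1 ≤ x → ∀ s : ℝ, 0 < s → s < sbar 1 →
        (D * (sIn - s) - k * μ s * (x : ℝ)) * deriv (Vt x) s
          + μ s * (x : ℝ) * (Vt (x + 1) s - Vt x s)
          + D * (x : ℝ) * (Vt (x - 1) s - Vt x s)
          ≤ -η * Vt x s + ζ * (x : ℝ) := by
  obtain ⟨hσ, hσIn⟩ := hsbar_mem 1 le_rfl
  have heq : D * (sIn - sbar 1) = k * μ (sbar 1) := by
    simpa [sub_eq_zero] using hsbar_eq 1 le_rfl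
  have hμ : HasDerivAt μ (deriv μ (sbar 1)) (sbar 1) :=
    ((hμC1.differentiableOn one_ne_zero).differentiableAt (Ici_mem_nhds hσ)).hasDerivAt
  obtain ⟨hθ0, η, hDη, hrate⟩ := exists_drift_rate hD hμD hp0 hp1 hθ
  obtain ⟨ζ, hζ⟩ := exists_generator_lyapunov_add_le (ρ := ρ) (α := α) hD hk hσ hσIn hρ
    ((div_le_iff₀' hk).1 hα) hp0 hθ0.le (hD.trans hDη).le (hμC1.mono Icc_subset_Ici_self) hμ0
    hμpos hμ heq (by linarith)
  refine ⟨η, max ζ 1, hDη, by positivity, fun x hx s hs hsσ => ?_⟩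
  have hW : ∀ y, 1 ≤ y → Vt y s = lyapunov (sbar 1) ρ α p θ y s :=
    fun y hy => hVt1 y hy s hs hsσ
  have hpred : Vt (x - 1) s ≤ lyapunov (sbar 1) ρ α p θ (x - 1) s := by
    rcases hx.eq_or_lt with rfl | hx
    · rw [hVt0 0 s hs (hsσ.trans hσIn) (Or.inl rfl)]
      exact (lyapunov_pos hρ hθ0.le 0 hs hsσ).le
    · exact (hW _ (by omega)).le
  have hev : Vt x =ᶠ[𝓝 s] lyapunov (sbar 1) ρ α p θ x :=
    eventually_of_mem (Ioo_mem_nhds hs hsσ) fun t ht => hVt1 x hx t ht.1 ht.2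
  have hgen := generator_le_of_eventuallyEq (k := k) (μ := μ) (sIn := sIn) hD.le hev
    (hW _ (by omega)) hpred
  have hζx : ζ * x ≤ max ζ 1 * x := by gcongr; exact le_max_left _ _
  change generator D sIn k μ Vt x s ≤ _
  rw [hW x hx]
  linarith [hζ x hx s ⟨hs, hsσ⟩]

/-- Lyapunov drift condition for the Crump–Young generator: under μ(s̄₁) > D and with
the parameters ρ, α, p, θ as in the paper, there exist η > D and ζ > 0 such that
L Ṽ(x, s) ≤ −η Ṽ(x, s) + ζ x on ℕ* × (0, s̄₁). -/
theorem stmt_16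
    (D sIn k : ℝ) (μ : ℝ → ℝ)
    (hD : 0 < D) (hsIn : 0 < sIn) (hk : 0 < k)
    (hμC1 : ContDiffOn ℝ 1 μ (Set.Ici 0))
    (hμmono : StrictMonoOn μ (Set.Ici 0))
    (hμ0 : μ 0 = 0)
    (hμpos : ∀ s : ℝ, 0 < s → 0 < μ s)
    (sbar : ℕ → ℝ)
    (hsbar_mem : ∀ ℓ : ℕ, 1 ≤ ℓ → sbar ℓ ∈ Set.Ioo 0 sIn)
    (hsbar_eq : ∀ ℓ : ℕ, 1 ≤ ℓ → D * (sIn - sbar ℓ) - k * μ (sbar ℓ) * (ℓ : ℝ) = 0)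
    (hμD : D < μ (sbar 1))
    (ρ α p θ : ℝ)
    (hρ : 1 < ρ)
    (hα : (ρ - 1) / k ≤ α)
    (hp0 : 0 < p)
    (hp1 : p < (μ (sbar 1) - D) / (D + k * deriv μ (sbar 1)))
    (hθ : (p * (D + k * deriv μ (sbar 1)) + D)
            / (μ (sbar 1) - (p * (D + k * deriv μ (sbar 1)) + D)) < θ)
    (Vt : ℕ → ℝ → ℝ)
    (hVt1 : ∀ x : ℕ, 1 ≤ x → ∀ s : ℝ, 0 < s → s < sbar 1 →
      Vt x s = ρ ^ x * Real.exp (α * s) / Real.log ρ + 1 / s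
        + (1 + (if x = 1 then θ else 0)) / (sbar 1 - s) ^ p)
    (hVt0 : ∀ x : ℕ, ∀ s : ℝ, 0 < s → s < sIn → (x = 0 ∨ sbar 1 ≤ s) → Vt x s = 0) :
    ∃ η ζ : ℝ, D < η ∧ 0 < ζ ∧
      ∀ x : ℕ, 1 ≤ x → ∀ s : ℝ, 0 < s → s < sbar 1 →
        (D * (sIn - s) - k * μ s * (x : ℝ)) * deriv (Vt x) s
          + μ s * (x : ℝ) * (Vt (x + 1) s - Vt x s)
          + D * (x : ℝ) * (Vt (x - 1) s - Vt x s)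
          ≤ -η * Vt x s + ζ * (x : ℝ) :=
  stmt_16_general D sIn k μ hD hk hμC1 hμ0 hμpos sbar hsbar_mem hsbar_eq hμD ρ α p θ hρ hα hp0 hp1
    hθ Vt hVt1 hVt0
end

section
/- There exist ε ∈ (0, s̄₁ − s̄₂), β > 0, δ₀ > 0, δ₁ > 0 and C > 0 such that, defining g : ℕ × ℝ → ℝ by g(x, s) = e^{βs} for x ≥ 2, g(1, s) = (1 + δ₁)e^{βs} and g(0, s) = δ₀ e^{βs}, one has for every integer x ≥ 1 and every s ≥ s̄₁ − ε: [D(s_in − s) − k μ(s) x]·β·g(x, s) + μ(s)·x·(g(x+1, s) − g(x, s)) + D·x·(g(x−1, s) − g(x, s)) ≤ −(C + D)·g(x, s). -/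
set_option maxHeartbeats 1000000


/-- Drift condition near and above s̄₁ (Lemma for the hitting time of (0, s̄₁−ε]):
there exist ε ∈ (0, s̄₁ − s̄₂), β, δ₀, δ₁, C > 0 such that, with
g(x, s) = e^{βs} for x ≥ 2, g(1, s) = (1+δ₁)e^{βs}, g(0, s) = δ₀ e^{βs}, the
generator satisfies L g(x, s) ≤ −(C + D) g(x, s) for all x ≥ 1 and s ≥ s̄₁ − ε. -/
theorem stmt_17
    (D sIn k : ℝ) (μ : ℝ → ℝ)
    (hD : 0 < D) (hsIn : 0 < sIn) (hk : 0 < k)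
    (hμC1 : ContDiffOn ℝ 1 μ (Set.Ici 0))
    (hμmono : StrictMonoOn μ (Set.Ici 0))
    (hμ0 : μ 0 = 0)
    (hμpos : ∀ s : ℝ, 0 < s → 0 < μ s)
    (sbar : ℕ → ℝ)
    (hsbar_mem : ∀ ℓ : ℕ, 1 ≤ ℓ → sbar ℓ ∈ Set.Ioo 0 sIn)
    (hsbar_eq : ∀ ℓ : ℕ, 1 ≤ ℓ → D * (sIn - sbar ℓ) - k * μ (sbar ℓ) * (ℓ : ℝ) = 0) :
    ∃ ε β δ₀ δ₁ C : ℝ,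
      0 < ε ∧ ε < sbar 1 - sbar 2 ∧ 0 < β ∧ 0 < δ₀ ∧ 0 < δ₁ ∧ 0 < C ∧
      ∀ g : ℕ → ℝ → ℝ,
        (∀ s : ℝ, g 0 s = δ₀ * Real.exp (β * s)) →
        (∀ s : ℝ, g 1 s = (1 + δ₁) * Real.exp (β * s)) →
        (∀ x : ℕ, 2 ≤ x → ∀ s : ℝ, g x s = Real.exp (β * s)) →
        ∀ x : ℕ, 1 ≤ x → ∀ s : ℝ, sbar 1 - ε ≤ s →
          (D * (sIn - s) - k * μ s * (x : ℝ)) * (β * g x s)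
            + μ s * (x : ℝ) * (g (x + 1) s - g x s)
            + D * (x : ℝ) * (g (x - 1) s - g x s)
            ≤ -(C + D) * g x s := by
  obtain ⟨hs1pos, hs1lt⟩ := hsbar_mem 1 le_rfl
  obtain ⟨hs2pos, hs2lt⟩ := hsbar_mem 2 (by norm_num)
  have h1 := hsbar_eq 1 le_rfl
  have h2 := hsbar_eq 2 (by norm_num)
  push_cast at h1 h2
  set s1 := sbar 1 with hs1def
  set s2 := sbar 2 with hs2def
  have hm : 0 < μ s1 := hμpos _ hs1pos
  set m := μ s1 with hmdef
  have hs21 : s2 < s1 := by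
    by_contra hle
    push_neg at hle
    rcases eq_or_lt_of_le hle with h | h
    · rw [← h, ← hmdef] at h2
      linarith [mul_pos hk hm]
    · have h3 : μ s1 < μ s2 := hμmono (le_of_lt hs1pos) (le_of_lt hs2pos) h
      have p1 : k * m < k * μ s2 := by
        rw [hmdef]; exact (mul_lt_mul_iff_right₀ hk).mpr h3
      have p2 : D * (sIn - s2) ≤ D * (sIn - s1) :=
        mul_le_mul_of_nonneg_left (by linarith) hD.le
      linarith [mul_pos hk hm]
  set C : ℝ := m / 16 with hCdef
  have hCpos : 0 < C := by positivity
  set β : ℝ := 2 * (C + 3 * D) / (k * m) with hβdef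
  have hβpos : 0 < β := by positivity
  set δ₀ : ℝ := m / (8 * D) with hδ₀def
  have hδ₀pos : 0 < δ₀ := by positivity
  set δ : ℝ := min (k * m / 4) (m / (16 * β)) with hδdef
  have hδpos : 0 < δ := lt_min (by positivity) (by positivity)
  have hβkm : β * (k * m / 2) = C + 3 * D := by
    rw [hβdef]; field_simp
  have hβδ : β * δ ≤ m / 16 := by
    calc β * δ ≤ β * (m / (16 * β)) :=
          mul_le_mul_of_nonneg_left (min_le_right _ _) hβpos.le
      _ = m / 16 := by field_simp
  have hδ₀D : D * δ₀ = m / 8 := by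
    rw [hδ₀def]; field_simp
  have hcont : ContinuousWithinAt (fun t => D * (s1 - t) + k * (m - μ t)) (Set.Ici 0) s1 := by
    have hμc : ContinuousWithinAt μ (Set.Ici 0) s1 :=
      (hμC1.continuousOn) s1 (Set.mem_Ici.mpr (le_of_lt hs1pos))
    exact ((continuousWithinAt_const.sub continuousWithinAt_id).const_mul D).add
      ((continuousWithinAt_const.sub hμc).const_mul k)
  have hsub : Set.Ioo s2 s1 ⊆ Set.Ici 0 := fun y hy => le_of_lt (lt_trans hs2pos hy.1)
  have htend : Filter.Tendsto (fun t => D * (s1 - t) + k * (m - μ t))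
      (nhdsWithin s1 (Set.Ioo s2 s1)) (nhds 0) := by
    have h0 : D * (s1 - s1) + k * (m - μ s1) = 0 := by rw [← hmdef]; ring
    have h' := hcont.tendsto.mono_left (nhdsWithin_mono _ hsub)
    rwa [h0] at h'
  have hev : ∀ᶠ t in nhdsWithin s1 (Set.Ioo s2 s1),
      D * (s1 - t) + k * (m - μ t) < δ := htend.eventually_lt_const hδpos
  have hmem : ∀ᶠ t in nhdsWithin s1 (Set.Ioo s2 s1), t ∈ Set.Ioo s2 s1 :=
    eventually_mem_nhdsWithin
  have hne : (nhdsWithin s1 (Set.Ioo s2 s1)).NeBot := right_nhdsWithin_Ioo_neBot hs21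
  obtain ⟨t, htδ, hts⟩ := (hev.and hmem).exists
  obtain ⟨hts2, hts1⟩ := hts
  have ht0 : 0 < t := lt_trans hs2pos hts2
  refine ⟨s1 - t, β, δ₀, 1, C, by linarith, by linarith, hβpos, hδ₀pos, one_pos, hCpos, ?_⟩
  intro g hg0 hg1 hg2 x hx s hs
  rw [show s1 - (s1 - t) = t by ring] at hs
  have hμt_le : μ t ≤ μ s := by
    rcases eq_or_lt_of_le hs with h | h
    · rw [h]
    · exact le_of_lt (hμmono (le_of_lt ht0) (le_trans (le_of_lt ht0) hs) h)
  have hμt_lt_m : μ t < m := hμmono (le_of_lt ht0) (le_of_lt hs1pos) hts1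
  have hμtpos : 0 < μ t := hμpos _ ht0
  have hDs1 : D * (sIn - s1) = k * m := by linarith
  have hδkm : δ ≤ k * m / 4 := min_le_left _ _
  have hDst : 0 < D * (s1 - t) := mul_pos hD (by linarith)
  -- k-scaled lower bound on μ t, μ s
  have hμt_lbk : 3 * (k * m) / 4 < k * μ t := by linarith
  have hμt_lb : 3 * m / 4 < μ t := (mul_lt_mul_iff_right₀ hk).mp (by linarith)
  have hμs : 3 * m / 4 < μ s := lt_of_lt_of_le hμt_lb hμt_le
  have hA : ∀ X : ℝ, 1 ≤ X → D * (sIn - s) - k * μ s * X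
      ≤ k * m + D * (s1 - t) - k * μ t * X := by
    intro X hX
    have h1' : D * (sIn - s) ≤ D * (sIn - t) := mul_le_mul_of_nonneg_left (by linarith) hD.le
    have h2' : k * μ t * X ≤ k * μ s * X :=
      mul_le_mul_of_nonneg_right (mul_le_mul_of_nonneg_left hμt_le hk.le) (by linarith)
    linarith
  have hE : 0 < Real.exp (β * s) := Real.exp_pos _
  set E := Real.exp (β * s) with hEdef
  rcases Nat.lt_or_ge x 3 with hx3 | hx3
  · interval_cases x
    · -- x = 1
      have e1 := hg1 s
      have e0 := hg0 s
      have e2 := hg2 2 le_rfl s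
      norm_num
      rw [e1, e0, e2]
      have hA1 : D * (sIn - s) - k * μ s * 1 ≤ δ := by
        have h' := hA 1 le_rfl
        have h'' : k * μ t * 1 = k * μ t := by ring
        linarith [htδ]
      have hβA : β * (D * (sIn - s) - k * μ s * 1) ≤ m / 16 := by
        calc β * (D * (sIn - s) - k * μ s * 1) ≤ β * δ :=
              mul_le_mul_of_nonneg_left hA1 hβpos.le
          _ ≤ m / 16 := hβδ
      have key : (D * (sIn - s) - k * μ s * 1) * (β * (1 + 1)) + μ s * 1 * (1 - (1 + 1))
          + D * 1 * (δ₀ - (1 + 1)) ≤ -(C + D) * (1 + 1) := by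
        linarith [hβA, hμs, hδ₀D, hm]
      have hfin := mul_le_mul_of_nonneg_right key hE.le
      linarith [hfin]
    · -- x = 2
      have e1 := hg1 s
      have e2 := hg2 2 le_rfl s
      have e3 := hg2 3 (by norm_num) s
      norm_num
      rw [e1, e2, e3]
      have hA2 : D * (sIn - s) - k * μ s * 2 ≤ -(k * m / 2) := by
        have h' := hA 2 (by norm_num)
        linarith [htδ, hδkm, hμt_lbk]
      have hβA : β * (D * (sIn - s) - k * μ s * 2) ≤ -(C + 3 * D) := by
        have h' : β * (D * (sIn - s) - k * μ s * 2) ≤ β * (-(k * m / 2)) :=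
          mul_le_mul_of_nonneg_left hA2 hβpos.le
        linarith [h', hβkm]
      have key : (D * (sIn - s) - k * μ s * 2) * (β * 1) + μ s * 2 * (1 - 1)
          + D * 2 * ((1 + 1) - 1) ≤ -(C + D) * 1 := by
        linarith [hβA]
      have hfin := mul_le_mul_of_nonneg_right key hE.le
      linarith [hfin]
  · -- x ≥ 3
    have exm := hg2 (x - 1) (by omega) s
    have ex := hg2 x (by omega) s
    have exp1 := hg2 (x + 1) (by omega) s
    rw [exm, ex, exp1]
    have hX1 : (2 : ℝ) ≤ (x : ℝ) := by exact_mod_cast by omega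
    have hAx : D * (sIn - s) - k * μ s * (x : ℝ) ≤ -(k * m / 2) := by
      have h' := hA (x : ℝ) (by linarith)
      have h'' : k * μ t * 2 ≤ k * μ t * (x : ℝ) :=
        mul_le_mul_of_nonneg_left hX1 (by positivity)
      linarith [htδ, hδkm, hμt_lbk]
    have hβA : β * (D * (sIn - s) - k * μ s * (x : ℝ)) ≤ -(C + 3 * D) := by
      have h' : β * (D * (sIn - s) - k * μ s * (x : ℝ)) ≤ β * (-(k * m / 2)) :=
        mul_le_mul_of_nonneg_left hAx hβpos.le
      linarith [h', hβkm]
    have key : (D * (sIn - s) - k * μ s * (x : ℝ)) * (β * 1) + μ s * (x : ℝ) * (1 - 1)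
        + D * (x : ℝ) * (1 - 1) ≤ -(C + D) * 1 := by
      linarith [hβA]
    have hfin := mul_le_mul_of_nonneg_right key hE.le
    linarith [hfin]
end

section
/- Let ℓ be a positive integer and let m, S satisfy s̄_ℓ < m ≤ S. Then k·μ(m)·ℓ − D(s_in − m) > 0, there exists a finite time T ≥ 0 with φ(ℓ, S, T) = m, and this hitting time satisfies T ≤ (S − m)/(k·μ(m)·ℓ − D(s_in − m)). -/
/-!
Write `g s = k μ(s) ℓ − D (s_in − s)`, so that the equation reads `s' = −g(s)`. Since `μ` is
increasing, `g` is strictly increasing and vanishes at `s̄_ℓ`, hence `c := g(m) > 0` and the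
velocity is at most `−c` as long as the solution stays above `m`. Comparing with the line
`S − c t`, the solution cannot stay above `m` up to time `(S − m)/c`, and the intermediate value
theorem yields the hitting time.
-/

open Set

theorem exists_eq_of_hasDerivWithinAt_le_neg {f f' : ℝ → ℝ} {m c : ℝ} (hc : 0 < c)
    (hm : m ≤ f 0) (hf : ∀ t, 0 ≤ t → HasDerivWithinAt f (f' t) (Ici 0) t)
    (hf' : ∀ t, 0 ≤ t → m < f t → f' t ≤ -c) :
    ∃ T, 0 ≤ T ∧ f T = m ∧ T ≤ (f 0 - m) / c := by
  set T₀ := (f 0 - m) / c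
  have hT₀ : 0 ≤ T₀ := div_nonneg (sub_nonneg.2 hm) hc.le
  have hcont : ContinuousOn f (Icc 0 T₀) := fun t ht =>
    (hf t ht.1).continuousWithinAt.mono fun _ hx => hx.1
  by_cases hbelow : ∃ t ∈ Icc 0 T₀, f t ≤ m
  · obtain ⟨t, ht, hft⟩ := hbelow
    obtain ⟨T, hT, hfT⟩ := intermediate_value_Icc' ht.1
      (hcont.mono (Icc_subset_Icc le_rfl ht.2)) ⟨hft, hm⟩
    exact ⟨T, hT.1, hfT, hT.2.trans ht.2⟩
  · push Not at hbelow
    have hline : f T₀ ≤ f 0 - c * T₀ :=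
      image_le_of_deriv_right_le_deriv_boundary hcont
        (fun t ht => (hf t ht.1).mono (Ici_subset_Ici.2 ht.1)) (by simp)
        (by fun_prop)
        (fun t _ => (((hasDerivAt_id t).const_mul c).const_sub (f 0)).hasDerivWithinAt)
        (fun t ht => by simpa using hf' t ht.1 (hbelow t (Ico_subset_Icc_self ht)))
        (right_mem_Icc.2 hT₀)
    have hcT₀ : c * T₀ = f 0 - m := mul_div_cancel₀ _ hc.ne'
    linarith [hbelow T₀ (right_mem_Icc.2 hT₀)]

theorem strictMonoOn_mul_mul_sub_mul_sub {μ : ℝ → ℝ} {D sIn k L : ℝ} (hD : 0 ≤ D) (hk : 0 < k)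
    (hL : 0 < L) (hμ : StrictMonoOn μ (Ici 0)) :
    StrictMonoOn (fun s => k * μ s * L - D * (sIn - s)) (Ici 0) := by
  intro a ha b hb hab
  have hμab := hμ ha hb hab
  have : k * μ a * L < k * μ b * L := by gcongr
  have : D * (sIn - b) ≤ D * (sIn - a) := by gcongr
  simp only
  linarith

theorem stmt_19_general
    (D sIn k : ℝ) (μ : ℝ → ℝ)
    (hD : 0 < D) (hk : 0 < k)
    (hμmono : StrictMonoOn μ (Set.Ici 0))
    (sbar : ℕ → ℝ)
    (hsbar_mem : ∀ ℓ : ℕ, 1 ≤ ℓ → sbar ℓ ∈ Set.Ioo 0 sIn)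
    (hsbar_eq : ∀ ℓ : ℕ, 1 ≤ ℓ → D * (sIn - sbar ℓ) - k * μ (sbar ℓ) * (ℓ : ℝ) = 0)
    (phi : ℕ → ℝ → ℝ → ℝ)
    (hphi_init : ∀ ℓ : ℕ, 1 ≤ ℓ → ∀ s₀ : ℝ, 0 ≤ s₀ → phi ℓ s₀ 0 = s₀)
    (hphi_deriv : ∀ ℓ : ℕ, 1 ≤ ℓ → ∀ s₀ : ℝ, 0 ≤ s₀ → ∀ t : ℝ, 0 ≤ t →
      HasDerivWithinAt (phi ℓ s₀)
        (D * (sIn - phi ℓ s₀ t) - k * μ (phi ℓ s₀ t) * (ℓ : ℝ)) (Set.Ici 0) t) :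
    ∀ ℓ : ℕ, 1 ≤ ℓ → ∀ m S : ℝ, sbar ℓ < m → m ≤ S →
      0 < k * μ m * (ℓ : ℝ) - D * (sIn - m) ∧
      ∃ T : ℝ, 0 ≤ T ∧ phi ℓ S T = m ∧
        T ≤ (S - m) / (k * μ m * (ℓ : ℝ) - D * (sIn - m)) := by
  intro ℓ hℓ m S hm hmS
  have hsbar₀ : 0 ≤ sbar ℓ := (hsbar_mem ℓ hℓ).1.le
  have hm₀ : 0 ≤ m := hsbar₀.trans hm.le
  have hS₀ : 0 ≤ S := hm₀.trans hmS
  have hg := strictMonoOn_mul_mul_sub_mul_sub (sIn := sIn) (L := ℓ) hD.le hk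
    (by exact_mod_cast hℓ) hμmono
  have hc : 0 < k * μ m * (ℓ : ℝ) - D * (sIn - m) := by
    linarith [hsbar_eq ℓ hℓ, hg hsbar₀ hm₀ hm]
  have hinit := hphi_init ℓ hℓ S hS₀
  obtain ⟨T, hT₀, hTm, hT⟩ := exists_eq_of_hasDerivWithinAt_le_neg hc (hinit ▸ hmS)
    (hphi_deriv ℓ hℓ S hS₀) fun t _ hmt => by
      linarith [hg.monotoneOn hm₀ (hm₀.trans hmt.le) hmt.le]
  exact ⟨hc, T, hT₀, hTm, hinit ▸ hT⟩

/-- For s̄_ℓ < m ≤ S one has k μ(m) ℓ − D(s_in − m) > 0, the flow started at S reaches m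
in a finite time T ≥ 0, and T ≤ (S − m)/(k μ(m) ℓ − D(s_in − m)). -/
theorem stmt_19
    (D sIn k : ℝ) (μ : ℝ → ℝ)
    (hD : 0 < D) (hsIn : 0 < sIn) (hk : 0 < k)
    (hμC1 : ContDiffOn ℝ 1 μ (Set.Ici 0))
    (hμmono : StrictMonoOn μ (Set.Ici 0))
    (hμ0 : μ 0 = 0)
    (hμpos : ∀ s : ℝ, 0 < s → 0 < μ s)
    (sbar : ℕ → ℝ)
    (hsbar_mem : ∀ ℓ : ℕ, 1 ≤ ℓ → sbar ℓ ∈ Set.Ioo 0 sIn)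
    (hsbar_eq : ∀ ℓ : ℕ, 1 ≤ ℓ → D * (sIn - sbar ℓ) - k * μ (sbar ℓ) * (ℓ : ℝ) = 0)
    (phi : ℕ → ℝ → ℝ → ℝ)
    (hphi_init : ∀ ℓ : ℕ, 1 ≤ ℓ → ∀ s₀ : ℝ, 0 ≤ s₀ → phi ℓ s₀ 0 = s₀)
    (hphi_deriv : ∀ ℓ : ℕ, 1 ≤ ℓ → ∀ s₀ : ℝ, 0 ≤ s₀ → ∀ t : ℝ, 0 ≤ t →
      HasDerivWithinAt (phi ℓ s₀)
        (D * (sIn - phi ℓ s₀ t) - k * μ (phi ℓ s₀ t) * (ℓ : ℝ)) (Set.Ici 0) t) :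
    ∀ ℓ : ℕ, 1 ≤ ℓ → ∀ m S : ℝ, sbar ℓ < m → m ≤ S →
      0 < k * μ m * (ℓ : ℝ) - D * (sIn - m) ∧
      ∃ T : ℝ, 0 ≤ T ∧ phi ℓ S T = m ∧
        T ≤ (S - m) / (k * μ m * (ℓ : ℝ) - D * (sIn - m)) :=
  stmt_19_general D sIn k μ hD hk hμmono sbar hsbar_mem hsbar_eq phi hphi_init hphi_deriv
end
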